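/- arXiv:1301.5258 — 8 statements merged into one kernel-verified Lean document; each statement's English description precedes it below -/
import Mathlib

section
/- Fix ρ ≥ 0. Then the function z ↦ g(ρ,z) is nonincreasing and concave on the interval [0,1]. -/
/-! With `α = 1/(1+ρ) ∈ (0,1]`, `g ρ z = u z ^ (1/α)` where `u z = ½(1+z)^α + ½(1-z)^α`
(the power mean of `1+z` and `1-z`). The sign of `(u ^ (1/α))''` is that of
`(1/α - 1) u'² + u u'' = α(1-α)/4 · ((p - q)² - (A + B)(P + Q))`, where `p = (1+z)^(α-1)`,
`A = (1+z)^α`, `P = (1+z)^(α-2)` and `q, B, Q` are the same at `1-z`; since `p² = AP` and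
`q² = BQ`, the bracket is `-2pq - AQ - BP < 0`. So `g ρ` is concave on `[-1, 1]`, and being
even it is nonincreasing on `[0, 1]`. -/

open Real

/-- Gallager's `g` function: `g ρ z = ((1/2)(1+z)^{1/(1+ρ)} + (1/2)(1-z)^{1/(1+ρ)})^{1+ρ}`. -/
noncomputable def g (ρ z : ℝ) : ℝ :=
  ((1/2) * (1 + z) ^ (1/(1+ρ)) + (1/2) * (1 - z) ^ (1/(1+ρ))) ^ (1+ρ)

/-- Gallager's `E0` of a binary-input channel `W` (input `false` is 0, `true` is 1)
under the uniform input distribution. -/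
noncomputable def E0 {Y : Type*} [Fintype Y] (ρ : ℝ) (W : Bool → Y → ℝ) : ℝ :=
  - Real.log (∑ y, ((1/2) * (W false y) ^ (1/(1+ρ)) + (1/2) * (W true y) ^ (1/(1+ρ))) ^ (1+ρ))

/-- `q_W(y) = (W(y|0)+W(y|1))/2`. -/
noncomputable def qW {Y : Type*} (W : Bool → Y → ℝ) (y : Y) : ℝ :=
  (W false y + W true y) / 2

/-- `Δ_W(y) = (W(y|0) - W(y|1))/(W(y|0)+W(y|1))`. -/
noncomputable def ΔW {Y : Type*} (W : Bool → Y → ℝ) (y : Y) : ℝ :=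
  (W false y - W true y) / (W false y + W true y)

/-- The minus polar transform of two channels. -/
noncomputable def Wminus {Y1 Y2 : Type*} (W1 : Bool → Y1 → ℝ) (W2 : Bool → Y2 → ℝ) :
    Bool → Y1 × Y2 → ℝ :=
  fun u1 y => ∑ u2 : Bool, (1/2) * W1 (xor u1 u2) y.1 * W2 u2 y.2

/-- The plus polar transform of two channels; output is `(y1, y2, u1)`. -/
noncomputable def Wplus {Y1 Y2 : Type*} (W1 : Bool → Y1 → ℝ) (W2 : Bool → Y2 → ℝ) :
    Bool → Y1 × Y2 × Bool → ℝ :=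
  fun u2 y => (1/2) * W1 (xor y.2.2 u2) y.1 * W2 u2 y.2.1

/-- The function `h(ρ, z1, z2)` from the `W⁺` representation. -/
noncomputable def hfun (ρ z1 z2 : ℝ) : ℝ :=
  (1/2) * (1 + z1*z2) * g ρ ((z1 + z2)/(1 + z1*z2))
    + (1/2) * (1 - z1*z2) * g ρ ((z1 - z2)/(1 - z1*z2))

open Set

theorem ConcaveOn.antitoneOn_Icc_of_even {f : ℝ → ℝ} {a : ℝ}
    (hf : ConcaveOn ℝ (Icc (-a) a) f) (heven : ∀ x, f (-x) = f x) : AntitoneOn f (Icc 0 a) := by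
  intro x ⟨hx0, _⟩ y ⟨_, hya⟩ hxy
  have hmem : x ∈ segment ℝ (-y) y := by
    rw [segment_eq_Icc (by linarith)]
    exact ⟨by linarith, hxy⟩
  have := hf.min_le_of_mem_segment ⟨by linarith, by linarith⟩ ⟨by linarith, hya⟩ hmem
  rwa [heven, min_self] at this

theorem concaveOn_rpow_of_hasDerivAt2 {D : Set ℝ} (hD : Convex ℝ D) {u u' u'' : ℝ → ℝ}
    {r : ℝ} (hr : 0 ≤ r) (hu : ContinuousOn u D) (hpos : ∀ x ∈ interior D, 0 < u x)
    (hu' : ∀ x ∈ interior D, HasDerivAt u (u' x) x)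
    (hu'' : ∀ x ∈ interior D, HasDerivAt u' (u'' x) x)
    (hineq : ∀ x ∈ interior D, (r - 1) * u' x ^ 2 + u x * u'' x ≤ 0) :
    ConcaveOn ℝ D fun x => u x ^ r := by
  refine concaveOn_of_hasDerivWithinAt2_nonpos hD (hu.rpow_const fun _ _ => Or.inr hr)
    (f' := fun x => r * u x ^ (r - 1) * u' x)
    (f'' := fun x => r * u x ^ (r - 2) * ((r - 1) * u' x ^ 2 + u x * u'' x))
    (fun x hx => ((hu' x hx).rpow_const (Or.inl (hpos x hx).ne')).hasDerivWithinAt.congr_deriv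
      (by ring)) (fun x hx => ?_) (fun x hx => ?_)
  · have hne := (hpos x hx).ne'
    have hpow := (hu' x hx).rpow_const (p := r - 1) (Or.inl hne)
    have hsplit : u x ^ (r - 1) = u x ^ (r - 2) * u x := by
      rw [← rpow_add_one hne]; ring_nf
    refine ((hpow.const_mul r).mul (hu'' x hx)).hasDerivWithinAt.congr_deriv ?_
    rw [show r - 1 - 1 = r - 2 by ring, hsplit]
    ring
  · exact mul_nonpos_of_nonneg_of_nonpos
      (mul_nonneg hr (rpow_nonneg (hpos x hx).le _)) (hineq x hx)

theorem hasDerivAt_mul_one_add_rpow_add_mul_one_sub_rpow (c d β : ℝ) {z : ℝ}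
    (hz : z ∈ Ioo (-1) 1) :
    HasDerivAt (fun z => c * (1 + z) ^ β + d * (1 - z) ^ β)
      (β * (c * (1 + z) ^ (β - 1) - d * (1 - z) ^ (β - 1))) z := by
  have hplus := ((hasDerivAt_id z).const_add 1).rpow_const (p := β)
    (Or.inl (by simp only [id]; linarith [hz.1]))
  have hminus := ((hasDerivAt_id z).const_sub 1).rpow_const (p := β)
    (Or.inl (by simp only [id]; linarith [hz.2]))
  exact ((hplus.const_mul c).add (hminus.const_mul d)).congr_deriv (by simp only [id]; ring)

theorem sq_rpow_sub_rpow_le {a b : ℝ} (ha : 0 < a) (hb : 0 < b) (α : ℝ) :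
    (a ^ (α - 1) - b ^ (α - 1)) ^ 2 ≤ (a ^ α + b ^ α) * (a ^ (α - 2) + b ^ (α - 2)) := by
  have hsq : ∀ {x : ℝ}, 0 < x → (x ^ (α - 1)) ^ 2 = x ^ α * x ^ (α - 2) := fun hx => by
    rw [sq, ← rpow_add hx, ← rpow_add hx]; ring_nf
  nlinarith [hsq ha, hsq hb, mul_pos (rpow_pos_of_pos ha (α - 1)) (rpow_pos_of_pos hb (α - 1)),
    mul_pos (rpow_pos_of_pos ha α) (rpow_pos_of_pos hb (α - 2)),
    mul_pos (rpow_pos_of_pos hb α) (rpow_pos_of_pos ha (α - 2))]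

theorem concaveOn_powerMean_one_add_one_sub {α : ℝ} (hα0 : 0 < α) (hα1 : α ≤ 1) :
    ConcaveOn ℝ (Icc (-1 : ℝ) 1)
      fun z => ((1/2) * (1 + z) ^ α + (1/2) * (1 - z) ^ α) ^ (1/α) := by
  refine concaveOn_rpow_of_hasDerivAt2 (convex_Icc (-1) 1) (by positivity) ?_ ?_ ?_ ?_ ?_
    (u' := fun x => (α/2) * (1 + x) ^ (α - 1) + (-(α/2)) * (1 - x) ^ (α - 1))
    (u'' := fun x =>
      (α - 1) * ((α/2) * (1 + x) ^ (α - 1 - 1) - (-(α/2)) * (1 - x) ^ (α - 1 - 1)))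
  · have hpow : ∀ {f : ℝ → ℝ}, Continuous f → Continuous fun x => f x ^ α :=
      fun hf => hf.rpow_const fun _ => Or.inr hα0.le
    exact ((continuous_const.mul (hpow (continuous_const.add continuous_id))).add
      (continuous_const.mul (hpow (continuous_const.sub continuous_id)))).continuousOn
  all_goals rw [interior_Icc]
  · intro x ⟨hx1, hx2⟩
    have := rpow_pos_of_pos (show 0 < 1 + x by linarith) α
    have := rpow_pos_of_pos (show 0 < 1 - x by linarith) α
    positivity
  · exact fun x hx => (hasDerivAt_mul_one_add_rpow_add_mul_one_sub_rpow _ _ α hx).congr_deriv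
      (by ring)
  · exact fun x hx => hasDerivAt_mul_one_add_rpow_add_mul_one_sub_rpow _ _ (α - 1) hx
  · intro x ⟨hx1, hx2⟩
    have key := sq_rpow_sub_rpow_le (show 0 < 1 + x by linarith) (show 0 < 1 - x by linarith) α
    have h1α : 0 ≤ 1 - α := by linarith
    calc _ = α * (1 - α) / 4 * (((1 + x) ^ (α - 1) - (1 - x) ^ (α - 1)) ^ 2
          - ((1 + x) ^ α + (1 - x) ^ α) * ((1 + x) ^ (α - 2) + (1 - x) ^ (α - 2))) := by
          rw [show α - 1 - 1 = α - 2 by ring]; field_simp; ring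
      _ ≤ 0 := mul_nonpos_of_nonneg_of_nonpos (by positivity) (by linarith)

theorem g_antitone_concave (ρ : ℝ) (hρ : 0 ≤ ρ) :
    AntitoneOn (fun z => g ρ z) (Set.Icc (0:ℝ) 1) ∧
      ConcaveOn ℝ (Set.Icc (0:ℝ) 1) (fun z => g ρ z) := by
  have hα0 : 0 < 1 / (1 + ρ) := by positivity
  have hα1 : 1 / (1 + ρ) ≤ 1 := by rw [div_le_one (by linarith)]; linarith
  have hconcave : ConcaveOn ℝ (Icc (-1) 1) fun z => g ρ z := by
    have := concaveOn_powerMean_one_add_one_sub hα0 hα1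
    rwa [one_div_one_div] at this
  have heven : ∀ z, g ρ (-z) = g ρ z := fun z => by
    rw [g, g, sub_neg_eq_add, ← sub_eq_add_neg, add_comm ((1/2) * (1 - z) ^ _)]
  exact ⟨hconcave.antitoneOn_Icc_of_even heven,
    hconcave.subset (Icc_subset_Icc (by norm_num) le_rfl) (convex_Icc 0 1)⟩
end

section
/- Fix ρ ∈ (−1,0]. Then the function z ↦ g(ρ,z) is nondecreasing and convex on the interval [0,1]. -/
open Real

/-!
With `p = 1/(1+ρ) ≥ 1` one has `g ρ z = (1/2)^(1+ρ) ‖(1+z, 1-z)‖_p` on `[-1, 1]`, the `ℓ^p` norm of an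
affine function of `z`, hence convex. As `g ρ` is also even, for `0 ≤ x ≤ y` convexity on the
segment `[-y, y]` gives `g ρ x ≤ max (g ρ (-y)) (g ρ y) = g ρ y`.
-/

open Set

theorem norm_toLp_fin_two {p : ℝ} (hp : 0 < p) (x : Fin 2 → ℝ) :
    ‖WithLp.toLp (ENNReal.ofReal p) x‖ = (|x 0| ^ p + |x 1| ^ p) ^ (1 / p) := by
  rw [PiLp.norm_eq_sum (by rwa [ENNReal.toReal_ofReal hp.le])]
  simp [ENNReal.toReal_ofReal hp.le, Fin.sum_univ_two]

theorem convexOn_rpow_abs_one_add_add_rpow_abs_one_sub {p : ℝ} (hp : 1 ≤ p) :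
    ConvexOn ℝ univ fun z : ℝ => (|1 + z| ^ p + |1 - z| ^ p) ^ (1 / p) := by
  have : Fact (1 ≤ ENNReal.ofReal p) := ⟨by simpa using hp⟩
  let A : ℝ →ᵃ[ℝ] PiLp (ENNReal.ofReal p) (fun _ : Fin 2 => ℝ) :=
    AffineMap.lineMap (WithLp.toLp _ ![1, 1]) (WithLp.toLp _ ![2, 0])
  refine ((convexOn_norm convex_univ).comp_affineMap A).congr fun z _ => ?_
  have hA : A z = WithLp.toLp _ ![1 + z, 1 - z] := by
    ext i
    fin_cases i <;> simp [A, AffineMap.lineMap_apply_module]; ring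
  simp only [Function.comp_apply, hA, norm_toLp_fin_two (by linarith : 0 < p)]
  rfl

theorem ConvexOn.monotoneOn_Icc_of_even {f : ℝ → ℝ} {a : ℝ} (hf : ConvexOn ℝ (Icc (-a) a) f)
    (heven : Function.Even f) : MonotoneOn f (Icc 0 a) := by
  rintro x ⟨hx0, -⟩ y ⟨hy0, hya⟩ hxy
  have hy' : y ∈ Icc (-a) a := ⟨by linarith, hya⟩
  have hy'' : -y ∈ Icc (-a) a := ⟨by linarith, by linarith⟩
  have hseg : x ∈ segment ℝ (-y) y := by
    rw [segment_eq_Icc (by linarith)]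
    exact ⟨by linarith, hxy⟩
  simpa [heven y] using hf.le_on_segment hy'' hy' hseg

theorem g_neg (ρ z : ℝ) : g ρ (-z) = g ρ z := by
  rw [g, g, sub_neg_eq_add, ← sub_eq_add_neg, add_comm]

theorem g_eq_mul_rpow (ρ : ℝ) {z : ℝ} (hz : z ∈ Icc (-1) 1) :
    g ρ z = (1 / 2) ^ (1 + ρ) * (|1 + z| ^ (1 / (1 + ρ)) + |1 - z| ^ (1 / (1 + ρ))) ^ (1 + ρ) := by
  have h₁ : 0 ≤ 1 + z := by linarith [hz.1]
  have h₂ : 0 ≤ 1 - z := by linarith [hz.2]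
  rw [abs_of_nonneg h₁, abs_of_nonneg h₂, g, ← mul_add,
    mul_rpow (by norm_num) (add_nonneg (rpow_nonneg h₁ _) (rpow_nonneg h₂ _))]

theorem convexOn_g {ρ : ℝ} (hρ : ρ ∈ Ioc (-1) 0) : ConvexOn ℝ (Icc (-1) 1) (g ρ) := by
  have hpos : 0 < 1 + ρ := by linarith [hρ.1]
  have hp : 1 ≤ 1 / (1 + ρ) := by rw [le_div_iff₀ hpos]; linarith [hρ.2]
  refine (((convexOn_rpow_abs_one_add_add_rpow_abs_one_sub hp).subset (subset_univ _)
    (convex_Icc _ _)).smul (by positivity : (0 : ℝ) ≤ (1 / 2) ^ (1 + ρ))).congr fun z hz => ?_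
  simp only [one_div_one_div, smul_eq_mul, g_eq_mul_rpow ρ hz]

theorem g_monotone_convex (ρ : ℝ) (hρ : ρ ∈ Set.Ioc (-1:ℝ) 0) :
    MonotoneOn (fun z => g ρ z) (Set.Icc (0:ℝ) 1) ∧
      ConvexOn ℝ (Set.Icc (0:ℝ) 1) (fun z => g ρ z) :=
  ⟨(convexOn_g hρ).monotoneOn_Icc_of_even (g_neg ρ),
    (convexOn_g hρ).subset (Icc_subset_Icc (by norm_num) le_rfl) (convex_Icc 0 1)⟩
end

section
/- Fix ρ ≥ 0 and let z1, z2 ∈ [0,1] with z1·z2 < 1. Then h(ρ,z1,z2) ≤ g(ρ,z1); that is, (1/2)(1+z1 z2)·g(ρ,(z1+z2)/(1+z1 z2)) + (1/2)(1−z1 z2)·g(ρ,(z1−z2)/(1−z1 z2)) ≤ g(ρ,z1). -/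
open Real

/-!
Put `q = 1/(1+ρ) ∈ (0, 1]` and let `M_q(a, b) = ((a^q + b^q)/2)^(1/q)` be the power mean, so that
`g ρ z = M_q(1+z, 1-z)`. Since `M_q` is positively homogeneous, the two terms of `h` are
`M_q((1+z1)(1+z2)/2, (1-z1)(1-z2)/2)` and `M_q((1+z1)(1-z2)/2, (1-z1)(1+z2)/2)`, whose arguments add
up to `(1+z1, 1-z1)`. The claim is therefore superadditivity of `M_q` for `q ≤ 1` (reverse
Minkowski), which follows from the two-term Hölder inequality
`m^(1-q) x^q + n^(1-q) y^q ≤ (m+n)^(1-q) (x+y)^q`, itself Jensen's inequality for `t ↦ t^q`.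
-/

lemma rpow_one_sub_mul_rpow_add_le {q m n x y : ℝ} (hq₀ : 0 ≤ q) (hq₁ : q ≤ 1)
    (hm : 0 < m) (hn : 0 < n) (hx : 0 ≤ x) (hy : 0 ≤ y) :
    m ^ (1 - q) * x ^ q + n ^ (1 - q) * y ^ q ≤ (m + n) ^ (1 - q) * (x + y) ^ q := by
  set s := m + n
  have hs : 0 < s := by positivity
  have hperspective : ∀ w z : ℝ, 0 < w → 0 ≤ z →
      s ^ (1 - q) * ((w / s) * (z / (w / s)) ^ q) = w ^ (1 - q) * z ^ q := by
    intro w z hw hz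
    have hws : 0 < w / s := by positivity
    rw [Real.div_rpow hz hws.le, Real.div_rpow hw.le hs.le, Real.rpow_sub hw, Real.rpow_sub hs,
      Real.rpow_one, Real.rpow_one]
    field_simp
  have hjensen := (Real.concaveOn_rpow hq₀ hq₁).2
    (Set.mem_Ici.mpr (by positivity : 0 ≤ x / (m / s)))
    (Set.mem_Ici.mpr (by positivity : 0 ≤ y / (n / s)))
    (by positivity : 0 ≤ m / s) (by positivity : 0 ≤ n / s)
    (by rw [← add_div, div_self hs.ne'])
  simp only [smul_eq_mul] at hjensen
  have hcombine : m / s * (x / (m / s)) + n / s * (y / (n / s)) = x + y := by field_simp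
  rw [hcombine] at hjensen
  calc m ^ (1 - q) * x ^ q + n ^ (1 - q) * y ^ q
      = s ^ (1 - q) * (m / s * (x / (m / s)) ^ q + n / s * (y / (n / s)) ^ q) := by
        rw [mul_add, hperspective m x hm hx, hperspective n y hn hy]
    _ ≤ s ^ (1 - q) * (x + y) ^ q := by gcongr

noncomputable def powMean (q a b : ℝ) : ℝ :=
  ((1/2) * a ^ q + (1/2) * b ^ q) ^ q⁻¹

section powMean

variable {q a b c d : ℝ}

lemma powMean_nonneg (ha : 0 ≤ a) (hb : 0 ≤ b) : 0 ≤ powMean q a b := by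
  unfold powMean
  positivity

lemma powMean_le_powMean (hq : 0 < q) (ha : 0 ≤ a) (hb : 0 ≤ b) (hac : a ≤ c)
    (hbd : b ≤ d) :
    powMean q a b ≤ powMean q c d := by
  unfold powMean
  gcongr

lemma powMean_rpow (hq : q ≠ 0) (ha : 0 ≤ a) (hb : 0 ≤ b) :
    powMean q a b ^ q = (1/2) * a ^ q + (1/2) * b ^ q :=
  Real.rpow_inv_rpow (by positivity) hq

lemma mul_powMean (hq : q ≠ 0) (hc : 0 ≤ c) (ha : 0 ≤ a) (hb : 0 ≤ b) :
    c * powMean q a b = powMean q (c * a) (c * b) := by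
  have hfactor : (1/2) * (c * a) ^ q + (1/2) * (c * b) ^ q
      = c ^ q * ((1/2) * a ^ q + (1/2) * b ^ q) := by
    rw [Real.mul_rpow hc ha, Real.mul_rpow hc hb]; ring
  rw [powMean, powMean, hfactor, Real.mul_rpow (by positivity) (by positivity),
    Real.rpow_rpow_inv hc hq]

lemma powMean_add_le (hq₀ : 0 < q) (hq₁ : q ≤ 1)
    (ha : 0 ≤ a) (hb : 0 ≤ b) (hc : 0 ≤ c) (hd : 0 ≤ d) :
    powMean q a b + powMean q c d ≤ powMean q (a + c) (b + d) := by
  rcases (powMean_nonneg ha hb).eq_or_lt with hm | hm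
  · rw [← hm, zero_add]
    exact powMean_le_powMean hq₀ hc hd (by linarith) (by linarith)
  rcases (powMean_nonneg hc hd).eq_or_lt with hn | hn
  · rw [← hn, add_zero]
    exact powMean_le_powMean hq₀ ha hb (by linarith) (by linarith)
  set m := powMean q a b
  set n := powMean q c d
  have hs : 0 < m + n := by positivity
  have hsplit : ∀ w : ℝ, 0 < w → w = w ^ (1 - q) * w ^ q := fun w hw => by
    rw [← Real.rpow_add hw, sub_add_cancel, Real.rpow_one]
  -- `m = m^(1-q) * m^q` and `m^q = (a^q + b^q)/2`, so Hölder applies coordinatewise.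
  have hholder : (m + n) ^ (1 - q) * (m + n) ^ q
      ≤ (m + n) ^ (1 - q) * ((1/2) * (a + c) ^ q + (1/2) * (b + d) ^ q) :=
    calc (m + n) ^ (1 - q) * (m + n) ^ q
        = (1/2) * (m ^ (1 - q) * a ^ q + n ^ (1 - q) * c ^ q)
          + (1/2) * (m ^ (1 - q) * b ^ q + n ^ (1 - q) * d ^ q) := by
          rw [← hsplit _ hs]
          nth_rewrite 1 [hsplit m hm, hsplit n hn]
          rw [powMean_rpow hq₀.ne' ha hb, powMean_rpow hq₀.ne' hc hd]
          ring
      _ ≤ (1/2) * ((m + n) ^ (1 - q) * (a + c) ^ q)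
          + (1/2) * ((m + n) ^ (1 - q) * (b + d) ^ q) := by
          gcongr <;> exact rpow_one_sub_mul_rpow_add_le hq₀.le hq₁ hm hn ‹_› ‹_›
      _ = _ := by ring
  have hrpow := le_of_mul_le_mul_left hholder (by positivity)
  calc m + n = ((m + n) ^ q) ^ q⁻¹ := (Real.rpow_rpow_inv hs.le hq₀.ne').symm
    _ ≤ powMean q (a + c) (b + d) := by unfold powMean; gcongr

end powMean

lemma g_eq_powMean (ρ z : ℝ) : g ρ z = powMean (1 + ρ)⁻¹ (1 + z) (1 - z) := by
  simp only [g, powMean, one_div, inv_inv]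

lemma half_mul_g_div {ρ s u : ℝ} (hρ : 1 + ρ ≠ 0) (hs : 0 < s) (hu₁ : -s ≤ u)
    (hu₂ : u ≤ s) :
    (1/2) * s * g ρ (u / s) = powMean (1 + ρ)⁻¹ ((s + u) / 2) ((s - u) / 2) := by
  have hplus : 1 + u / s = (s + u) / s := by field_simp
  have hminus : 1 - u / s = (s - u) / s := by field_simp
  rw [g_eq_powMean, mul_powMean (inv_ne_zero hρ) (by positivity), hplus, hminus]
  · congr 1 <;> field_simp
  · rw [hplus]; exact div_nonneg (by linarith) hs.le
  · rw [hminus]; exact div_nonneg (by linarith) hs.le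

theorem hfun_le_g (ρ z1 z2 : ℝ) (hρ : 0 ≤ ρ)
    (hz1 : z1 ∈ Set.Icc (0:ℝ) 1) (hz2 : z2 ∈ Set.Icc (0:ℝ) 1)
    (hlt : z1 * z2 < 1) :
    (1/2) * (1 + z1*z2) * g ρ ((z1 + z2)/(1 + z1*z2))
        + (1/2) * (1 - z1*z2) * g ρ ((z1 - z2)/(1 - z1*z2)) ≤ g ρ z1 := by
  obtain ⟨hz1₀, hz1₁⟩ := hz1
  obtain ⟨hz2₀, hz2₁⟩ := hz2
  have hq₀ : 0 < (1 + ρ)⁻¹ := by positivity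
  have hq₁ : (1 + ρ)⁻¹ ≤ 1 := inv_le_one_of_one_le₀ (by linarith)
  have hprod : 0 ≤ z1 * z2 := mul_nonneg hz1₀ hz2₀
  rw [half_mul_g_div (by positivity) (by positivity) (by nlinarith) (by nlinarith),
    half_mul_g_div (by positivity) (by linarith) (by nlinarith) (by nlinarith), g_eq_powMean]
  calc _ ≤ powMean (1 + ρ)⁻¹ ((1 + z1 * z2 + (z1 + z2)) / 2 + (1 - z1 * z2 + (z1 - z2)) / 2)
        ((1 + z1 * z2 - (z1 + z2)) / 2 + (1 - z1 * z2 - (z1 - z2)) / 2) :=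
      powMean_add_le hq₀ hq₁ (by nlinarith) (by nlinarith) (by nlinarith) (by nlinarith)
    _ = powMean (1 + ρ)⁻¹ (1 + z1) (1 - z1) := by congr 1 <;> ring
end

section
/- Let W1 and W2 be B-DMCs with finite output alphabets satisfying W_i(y|0)+W_i(y|1) > 0 for every output y, assume |Δ_{W1}(y1)·Δ_{W2}(y2)| < 1 for all y1, y2, and let ρ ≥ 0. Then E0(ρ, W⁻) ≤ E0(ρ, W1) ≤ E0(ρ, W⁺) and E0(ρ, W⁻) ≤ E0(ρ, W2) ≤ E0(ρ, W⁺), where W⁻ and W⁺ are the minus and plus polar transforms of W1 and W2. -/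
open Real

/-! ### Auxiliary: the power-mean function `mfun` and its properties -/

/-- The summand of Gallager's `E0` sum, as a function of the two channel values. -/
noncomputable def mfun (ρ p q : ℝ) : ℝ :=
  ((1/2) * p ^ (1/(1+ρ)) + (1/2) * q ^ (1/(1+ρ))) ^ (1+ρ)

section MfunLemmas

variable {ρ p q : ℝ}

lemma mfun_nonneg (hp : 0 ≤ p) (hq : 0 ≤ q) : 0 ≤ mfun ρ p q := by
  unfold mfun; positivity

lemma mfun_comm : mfun ρ p q = mfun ρ q p := by unfold mfun; ring_nf

lemma mfun_zero (hρ : 0 ≤ ρ) : mfun ρ 0 0 = 0 := by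
  have ha : (0:ℝ) < 1/(1+ρ) := by positivity
  have hb : (0:ℝ) < 1+ρ := by linarith
  unfold mfun
  rw [Real.zero_rpow ha.ne']
  norm_num
  exact Real.zero_rpow hb.ne'

lemma mfun_pos (hρ : 0 ≤ ρ) (hp : 0 < p) (hq : 0 ≤ q) : 0 < mfun ρ p q := by
  unfold mfun
  have h1 : 0 < (1/2) * p ^ (1/(1+ρ)) + (1/2) * q ^ (1/(1+ρ)) := by
    have := Real.rpow_pos_of_pos hp (1/(1+ρ))
    have := Real.rpow_nonneg hq (1/(1+ρ))
    linarith
  exact Real.rpow_pos_of_pos h1 _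

lemma mfun_smul (hρ : 0 ≤ ρ) {c : ℝ} (hc : 0 ≤ c) (hp : 0 ≤ p) (hq : 0 ≤ q) :
    mfun ρ (c*p) (c*q) = c * mfun ρ p q := by
  unfold mfun
  rw [Real.mul_rpow hc hp, Real.mul_rpow hc hq]
  have h1 : (1/2) * (c ^ (1/(1+ρ)) * p ^ (1/(1+ρ))) + (1/2) * (c ^ (1/(1+ρ)) * q ^ (1/(1+ρ)))
      = c ^ (1/(1+ρ)) * ((1/2) * p ^ (1/(1+ρ)) + (1/2) * q ^ (1/(1+ρ))) := by ring
  rw [h1, Real.mul_rpow (Real.rpow_nonneg hc _) (by positivity), ← Real.rpow_mul hc,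
    one_div_mul_cancel (by positivity : (1:ℝ)+ρ ≠ 0), Real.rpow_one]

lemma concave2 (hρ : 0 ≤ ρ) {w1 w2 x y : ℝ} (hw1 : 0 ≤ w1) (hw2 : 0 ≤ w2)
    (hw : w1 + w2 = 1) (hx : 0 ≤ x) (hy : 0 ≤ y) :
    w1 * x ^ (1/(1+ρ)) + w2 * y ^ (1/(1+ρ)) ≤ (w1*x + w2*y) ^ (1/(1+ρ)) := by
  have hb1 : (1:ℝ) ≤ 1 + ρ := by linarith
  have h := Real.arith_mean_le_rpow_mean (Finset.univ : Finset (Fin 2))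
    ![w1, w2] ![x ^ (1/(1+ρ)), y ^ (1/(1+ρ))]
    (by intro i _; fin_cases i <;> simpa) (by simp [Fin.sum_univ_two, hw])
    (by intro i _; fin_cases i <;> simp [Real.rpow_nonneg, hx, hy]) hb1
  simp only [Fin.sum_univ_two, Matrix.cons_val_zero, Matrix.cons_val_one, Matrix.head_cons] at h
  have hxr : (x ^ (1/(1+ρ))) ^ (1+ρ) = x := by
    rw [← Real.rpow_mul hx, one_div_mul_cancel (by linarith : (1:ℝ)+ρ ≠ 0), Real.rpow_one]
  have hyr : (y ^ (1/(1+ρ))) ^ (1+ρ) = y := by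
    rw [← Real.rpow_mul hy, one_div_mul_cancel (by linarith : (1:ℝ)+ρ ≠ 0), Real.rpow_one]
  rwa [hxr, hyr] at h

lemma mfun_eq_zero (hρ : 0 ≤ ρ) (hp : 0 ≤ p) (hq : 0 ≤ q) (h : mfun ρ p q = 0) :
    p = 0 ∧ q = 0 := by
  have ha : (0:ℝ) < 1/(1+ρ) := by positivity
  unfold mfun at h
  have hF : (1/2) * p ^ (1/(1+ρ)) + (1/2) * q ^ (1/(1+ρ)) = 0 :=
    ((Real.rpow_eq_zero (by positivity) (by positivity : (1:ℝ)+ρ ≠ 0)).mp h)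
  have h1 := Real.rpow_nonneg hp (1/(1+ρ))
  have h2 := Real.rpow_nonneg hq (1/(1+ρ))
  have hp' : p ^ (1/(1+ρ)) = 0 := by linarith
  have hq' : q ^ (1/(1+ρ)) = 0 := by linarith
  exact ⟨(Real.rpow_eq_zero hp ha.ne').mp hp', (Real.rpow_eq_zero hq ha.ne').mp hq'⟩

lemma mfun_rpow_inv (hρ : 0 ≤ ρ) (hp : 0 ≤ p) (hq : 0 ≤ q) :
    (mfun ρ p q) ^ (1/(1+ρ)) = (1/2) * p ^ (1/(1+ρ)) + (1/2) * q ^ (1/(1+ρ)) := by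
  unfold mfun
  rw [← Real.rpow_mul (by positivity), mul_one_div_cancel (by positivity : (1:ℝ)+ρ ≠ 0),
    Real.rpow_one]

end MfunLemmas
lemma mfun_superadd (hρ : 0 ≤ ρ) {p1 q1 p2 q2 : ℝ}
    (hp1 : 0 ≤ p1) (hq1 : 0 ≤ q1) (hp2 : 0 ≤ p2) (hq2 : 0 ≤ q2) :
    mfun ρ p1 q1 + mfun ρ p2 q2 ≤ mfun ρ (p1+p2) (q1+q2) := by
  have ha : (0:ℝ) < 1/(1+ρ) := by positivity
  have hb : (0:ℝ) < 1+ρ := by linarith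
  have hmz : mfun ρ 0 0 = 0 := by
    unfold mfun
    rw [Real.zero_rpow ha.ne']
    norm_num
    exact Real.zero_rpow hb.ne'
  rcases eq_or_lt_of_le (mfun_nonneg hp1 hq1) with h1 | h1
  · obtain ⟨e1, e2⟩ := mfun_eq_zero hρ hp1 hq1 h1.symm
    simp [e1, e2, hmz, ← h1]
  rcases eq_or_lt_of_le (mfun_nonneg hp2 hq2) with h2 | h2
  · obtain ⟨e1, e2⟩ := mfun_eq_zero hρ hp2 hq2 h2.symm
    simp [e1, e2, hmz, ← h2]
  have hs : 0 < mfun ρ p1 q1 + mfun ρ p2 q2 := by positivity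
  -- abbreviations (plain terms)
  have hwsum : mfun ρ p1 q1 / (mfun ρ p1 q1 + mfun ρ p2 q2)
      + mfun ρ p2 q2 / (mfun ρ p1 q1 + mfun ρ p2 q2) = 1 := by field_simp
  have main : ∀ x1 x2 : ℝ, 0 ≤ x1 → 0 ≤ x2 →
      (mfun ρ p1 q1 / (mfun ρ p1 q1 + mfun ρ p2 q2)
          * ((mfun ρ p1 q1 + mfun ρ p2 q2) / mfun ρ p1 q1) ^ (1/(1+ρ))) * x1 ^ (1/(1+ρ))
        + (mfun ρ p2 q2 / (mfun ρ p1 q1 + mfun ρ p2 q2)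
          * ((mfun ρ p1 q1 + mfun ρ p2 q2) / mfun ρ p2 q2) ^ (1/(1+ρ))) * x2 ^ (1/(1+ρ))
        ≤ (x1 + x2) ^ (1/(1+ρ)) := by
    intro x1 x2 hx1 hx2
    have hc := concave2 hρ (by positivity) (by positivity) hwsum
      (by positivity : (0:ℝ) ≤ x1*((mfun ρ p1 q1 + mfun ρ p2 q2) / mfun ρ p1 q1))
      (by positivity : (0:ℝ) ≤ x2*((mfun ρ p1 q1 + mfun ρ p2 q2) / mfun ρ p2 q2))
    have e1 : mfun ρ p1 q1 / (mfun ρ p1 q1 + mfun ρ p2 q2)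
          * (x1*((mfun ρ p1 q1 + mfun ρ p2 q2) / mfun ρ p1 q1))
        + mfun ρ p2 q2 / (mfun ρ p1 q1 + mfun ρ p2 q2)
          * (x2*((mfun ρ p1 q1 + mfun ρ p2 q2) / mfun ρ p2 q2)) = x1 + x2 := by
      field_simp
    rw [e1] at hc
    have e2 : ∀ x t : ℝ, 0 ≤ x → 0 < t →
        t / (mfun ρ p1 q1 + mfun ρ p2 q2)
            * (x*((mfun ρ p1 q1 + mfun ρ p2 q2) / t)) ^ (1/(1+ρ))
          = (t / (mfun ρ p1 q1 + mfun ρ p2 q2)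
            * ((mfun ρ p1 q1 + mfun ρ p2 q2) / t) ^ (1/(1+ρ))) * x ^ (1/(1+ρ)) := by
      intro x t hx ht
      rw [Real.mul_rpow hx (by positivity)]
      ring
    rw [e2 x1 (mfun ρ p1 q1) hx1 h1, e2 x2 (mfun ρ p2 q2) hx2 h2] at hc
    exact hc
  have hcp := main p1 p2 hp1 hp2
  have hcq := main q1 q2 hq1 hq2
  have hc1s : (mfun ρ p1 q1 / (mfun ρ p1 q1 + mfun ρ p2 q2)
        * ((mfun ρ p1 q1 + mfun ρ p2 q2) / mfun ρ p1 q1) ^ (1/(1+ρ)))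
        * (mfun ρ p1 q1) ^ (1/(1+ρ))
      = mfun ρ p1 q1 / (mfun ρ p1 q1 + mfun ρ p2 q2)
        * (mfun ρ p1 q1 + mfun ρ p2 q2) ^ (1/(1+ρ)) := by
    rw [Real.div_rpow hs.le h1.le]
    field_simp [(Real.rpow_pos_of_pos h1 (1/(1+ρ))).ne']
  have hc2s : (mfun ρ p2 q2 / (mfun ρ p1 q1 + mfun ρ p2 q2)
        * ((mfun ρ p1 q1 + mfun ρ p2 q2) / mfun ρ p2 q2) ^ (1/(1+ρ)))
        * (mfun ρ p2 q2) ^ (1/(1+ρ))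
      = mfun ρ p2 q2 / (mfun ρ p1 q1 + mfun ρ p2 q2)
        * (mfun ρ p1 q1 + mfun ρ p2 q2) ^ (1/(1+ρ)) := by
    rw [Real.div_rpow hs.le h2.le]
    field_simp [(Real.rpow_pos_of_pos h2 (1/(1+ρ))).ne']
  have hF1 := mfun_rpow_inv hρ hp1 hq1
  have hF2 := mfun_rpow_inv hρ hp2 hq2
  have key : (mfun ρ p1 q1 + mfun ρ p2 q2) ^ (1/(1+ρ))
      ≤ (1/2) * (p1+p2) ^ (1/(1+ρ)) + (1/2) * (q1+q2) ^ (1/(1+ρ)) := by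
    have hsplit : (mfun ρ p1 q1 + mfun ρ p2 q2) ^ (1/(1+ρ))
        = (1/2 : ℝ) * ((mfun ρ p1 q1 / (mfun ρ p1 q1 + mfun ρ p2 q2)
            * ((mfun ρ p1 q1 + mfun ρ p2 q2) / mfun ρ p1 q1) ^ (1/(1+ρ))) * p1 ^ (1/(1+ρ))
          + (mfun ρ p2 q2 / (mfun ρ p1 q1 + mfun ρ p2 q2)
            * ((mfun ρ p1 q1 + mfun ρ p2 q2) / mfun ρ p2 q2) ^ (1/(1+ρ))) * p2 ^ (1/(1+ρ)))
        + (1/2 : ℝ) * ((mfun ρ p1 q1 / (mfun ρ p1 q1 + mfun ρ p2 q2)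
            * ((mfun ρ p1 q1 + mfun ρ p2 q2) / mfun ρ p1 q1) ^ (1/(1+ρ))) * q1 ^ (1/(1+ρ))
          + (mfun ρ p2 q2 / (mfun ρ p1 q1 + mfun ρ p2 q2)
            * ((mfun ρ p1 q1 + mfun ρ p2 q2) / mfun ρ p2 q2) ^ (1/(1+ρ))) * q2 ^ (1/(1+ρ))) := by
      have expand : (1/2 : ℝ) * ((mfun ρ p1 q1 / (mfun ρ p1 q1 + mfun ρ p2 q2)
            * ((mfun ρ p1 q1 + mfun ρ p2 q2) / mfun ρ p1 q1) ^ (1/(1+ρ))) * p1 ^ (1/(1+ρ))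
          + (mfun ρ p2 q2 / (mfun ρ p1 q1 + mfun ρ p2 q2)
            * ((mfun ρ p1 q1 + mfun ρ p2 q2) / mfun ρ p2 q2) ^ (1/(1+ρ))) * p2 ^ (1/(1+ρ)))
        + (1/2 : ℝ) * ((mfun ρ p1 q1 / (mfun ρ p1 q1 + mfun ρ p2 q2)
            * ((mfun ρ p1 q1 + mfun ρ p2 q2) / mfun ρ p1 q1) ^ (1/(1+ρ))) * q1 ^ (1/(1+ρ))
          + (mfun ρ p2 q2 / (mfun ρ p1 q1 + mfun ρ p2 q2)
            * ((mfun ρ p1 q1 + mfun ρ p2 q2) / mfun ρ p2 q2) ^ (1/(1+ρ))) * q2 ^ (1/(1+ρ)))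
        = (mfun ρ p1 q1 / (mfun ρ p1 q1 + mfun ρ p2 q2)
            * ((mfun ρ p1 q1 + mfun ρ p2 q2) / mfun ρ p1 q1) ^ (1/(1+ρ)))
            * ((1/2) * p1 ^ (1/(1+ρ)) + (1/2) * q1 ^ (1/(1+ρ)))
        + (mfun ρ p2 q2 / (mfun ρ p1 q1 + mfun ρ p2 q2)
            * ((mfun ρ p1 q1 + mfun ρ p2 q2) / mfun ρ p2 q2) ^ (1/(1+ρ)))
            * ((1/2) * p2 ^ (1/(1+ρ)) + (1/2) * q2 ^ (1/(1+ρ))) := by ring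
      rw [expand, ← hF1, ← hF2, hc1s, hc2s]
      field_simp
    rw [hsplit]
    linarith [hcp, hcq]
  have hfin : ((mfun ρ p1 q1 + mfun ρ p2 q2) ^ (1/(1+ρ))) ^ (1+ρ)
      ≤ ((1/2) * (p1+p2) ^ (1/(1+ρ)) + (1/2) * (q1+q2) ^ (1/(1+ρ))) ^ (1+ρ) :=
    Real.rpow_le_rpow (by positivity) key hb.le
  rw [← Real.rpow_mul hs.le, one_div_mul_cancel hb.ne', Real.rpow_one] at hfin
  exact hfin

lemma mfun_sum {ρ : ℝ} (hρ : 0 ≤ ρ) {ι : Type*} (s : Finset ι) (P Q : ι → ℝ)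
    (hP : ∀ i ∈ s, 0 ≤ P i) (hQ : ∀ i ∈ s, 0 ≤ Q i) :
    ∑ i ∈ s, mfun ρ (P i) (Q i) ≤ mfun ρ (∑ i ∈ s, P i) (∑ i ∈ s, Q i) := by
  induction s using Finset.cons_induction with
  | empty => simp [mfun_zero hρ]
  | cons j s hj ih =>
    rw [Finset.sum_cons, Finset.sum_cons, Finset.sum_cons]
    have hP' : ∀ i ∈ s, 0 ≤ P i := fun i hi => hP i (Finset.mem_cons_of_mem hi)
    have hQ' : ∀ i ∈ s, 0 ≤ Q i := fun i hi => hQ i (Finset.mem_cons_of_mem hi)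
    calc mfun ρ (P j) (Q j) + ∑ i ∈ s, mfun ρ (P i) (Q i)
        ≤ mfun ρ (P j) (Q j) + mfun ρ (∑ i ∈ s, P i) (∑ i ∈ s, Q i) := by
          linarith [ih hP' hQ']
      _ ≤ mfun ρ (P j + ∑ i ∈ s, P i) (Q j + ∑ i ∈ s, Q i) :=
          mfun_superadd hρ (hP j (Finset.mem_cons_self j s)) (hQ j (Finset.mem_cons_self j s))
            (Finset.sum_nonneg hP') (Finset.sum_nonneg hQ')

lemma pair_bound {ρ : ℝ} (hρ : 0 ≤ ρ) {p q v w : ℝ}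
    (hp : 0 ≤ p) (hq : 0 ≤ q) (hv : 0 ≤ v) (hw : 0 ≤ w) :
    (v + w)/2 * mfun ρ p q ≤ mfun ρ (1/2*v*p + 1/2*w*q) (1/2*v*q + 1/2*w*p) := by
  have h := mfun_superadd hρ (by positivity : (0:ℝ) ≤ 1/2*v*p)
    (by positivity : (0:ℝ) ≤ 1/2*v*q) (by positivity : (0:ℝ) ≤ 1/2*w*q)
    (by positivity : (0:ℝ) ≤ 1/2*w*p)
  have e1 : mfun ρ (1/2*v*p) (1/2*v*q) = (1/2*v) * mfun ρ p q :=
    mfun_smul hρ (by positivity) hp hq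
  have e2 : mfun ρ (1/2*w*q) (1/2*w*p) = (1/2*w) * mfun ρ p q := by
    rw [mfun_smul hρ (by positivity) hq hp, mfun_comm]
  rw [e1, e2] at h
  have e3 : (v + w)/2 * mfun ρ p q = (1/2*v) * mfun ρ p q + (1/2*w) * mfun ρ p q := by ring
  rw [e3]
  exact h

theorem E0_ordering {Y1 Y2 : Type*} [Fintype Y1] [Fintype Y2]
    (W1 : Bool → Y1 → ℝ) (W2 : Bool → Y2 → ℝ)
    (hW1_nonneg : ∀ x y, 0 ≤ W1 x y) (hW1_sum : ∀ x, ∑ y, W1 x y = 1)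
    (hW1_pos : ∀ y, 0 < W1 false y + W1 true y)
    (hW2_nonneg : ∀ x y, 0 ≤ W2 x y) (hW2_sum : ∀ x, ∑ y, W2 x y = 1)
    (hW2_pos : ∀ y, 0 < W2 false y + W2 true y)
    (hΔ : ∀ y1 y2, |ΔW W1 y1 * ΔW W2 y2| < 1)
    (ρ : ℝ) (hρ : 0 ≤ ρ) :
    (E0 ρ (Wminus W1 W2) ≤ E0 ρ W1 ∧ E0 ρ W1 ≤ E0 ρ (Wplus W1 W2)) ∧
      (E0 ρ (Wminus W1 W2) ≤ E0 ρ W2 ∧ E0 ρ W2 ≤ E0 ρ (Wplus W1 W2)) := by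
  classical
  -- row-sum facts
  have hsum1 : ∑ y1, (W1 false y1 + W1 true y1)/2 = 1 := by
    rw [← Finset.sum_div, Finset.sum_add_distrib, hW1_sum false, hW1_sum true]
    norm_num
  have hsum2 : ∑ y2, (W2 false y2 + W2 true y2)/2 = 1 := by
    rw [← Finset.sum_div, Finset.sum_add_distrib, hW2_sum false, hW2_sum true]
    norm_num
  -- unfoldings of the transforms
  have hWm_f : ∀ (y1 : Y1) (y2 : Y2), Wminus W1 W2 false (y1, y2)
      = 1/2 * W2 false y2 * W1 false y1 + 1/2 * W2 true y2 * W1 true y1 := by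
    intro y1 y2; simp [Wminus, Fintype.sum_bool]; ring
  have hWm_t : ∀ (y1 : Y1) (y2 : Y2), Wminus W1 W2 true (y1, y2)
      = 1/2 * W2 false y2 * W1 true y1 + 1/2 * W2 true y2 * W1 false y1 := by
    intro y1 y2; simp [Wminus, Fintype.sum_bool]; ring
  have hWm_f' : ∀ (y1 : Y1) (y2 : Y2), Wminus W1 W2 false (y1, y2)
      = 1/2 * W1 false y1 * W2 false y2 + 1/2 * W1 true y1 * W2 true y2 := by
    intro y1 y2; rw [hWm_f]; ring
  have hWm_t' : ∀ (y1 : Y1) (y2 : Y2), Wminus W1 W2 true (y1, y2)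
      = 1/2 * W1 false y1 * W2 true y2 + 1/2 * W1 true y1 * W2 false y2 := by
    intro y1 y2; rw [hWm_t]; ring
  have hWp_f : ∀ (y1 : Y1) (y2 : Y2) (u1 : Bool), Wplus W1 W2 false (y1, y2, u1)
      = 1/2 * W1 u1 y1 * W2 false y2 := by
    intro y1 y2 u1; simp [Wplus]
  have hWp_t : ∀ (y1 : Y1) (y2 : Y2) (u1 : Bool), Wplus W1 W2 true (y1, y2, u1)
      = 1/2 * W1 (!u1) y1 * W2 true y2 := by
    intro y1 y2 u1; simp [Wplus]
  -- the three sums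
  set S1 := ∑ y1, mfun ρ (W1 false y1) (W1 true y1) with hS1_def
  set S2 := ∑ y2, mfun ρ (W2 false y2) (W2 true y2) with hS2_def
  set Sm := ∑ y : Y1 × Y2, mfun ρ (Wminus W1 W2 false y) (Wminus W1 W2 true y) with hSm_def
  set Sp := ∑ y : Y1 × Y2 × Bool, mfun ρ (Wplus W1 W2 false y) (Wplus W1 W2 true y) with hSp_def
  -- normalized form of Sp
  have hSp_eq : Sp = ∑ y1, ∑ y2, ∑ u1 : Bool,
      mfun ρ (1/2 * W1 u1 y1 * W2 false y2) (1/2 * W1 (!u1) y1 * W2 true y2) := by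
    rw [hSp_def, Fintype.sum_prod_type]
    refine Finset.sum_congr rfl fun y1 _ => ?_
    rw [Fintype.sum_prod_type]
    refine Finset.sum_congr rfl fun y2 _ => Finset.sum_congr rfl fun u1 _ => ?_
    rw [hWp_f, hWp_t]
  -- S1 ≤ Sm
  have hS1m : S1 ≤ Sm := by
    rw [hS1_def, hSm_def, Fintype.sum_prod_type]
    calc ∑ y1, mfun ρ (W1 false y1) (W1 true y1)
        = ∑ y1, ∑ y2, (W2 false y2 + W2 true y2)/2 * mfun ρ (W1 false y1) (W1 true y1) := by
          refine Finset.sum_congr rfl fun y1 _ => ?_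
          rw [← Finset.sum_mul, hsum2, one_mul]
      _ ≤ ∑ y1, ∑ y2, mfun ρ (Wminus W1 W2 false (y1, y2)) (Wminus W1 W2 true (y1, y2)) := by
          refine Finset.sum_le_sum fun y1 _ => Finset.sum_le_sum fun y2 _ => ?_
          rw [hWm_f y1 y2, hWm_t y1 y2]
          exact pair_bound hρ (hW1_nonneg false y1) (hW1_nonneg true y1)
            (hW2_nonneg false y2) (hW2_nonneg true y2)
  -- S2 ≤ Sm
  have hS2m : S2 ≤ Sm := by
    rw [hS2_def, hSm_def, Fintype.sum_prod_type]
    calc ∑ y2, mfun ρ (W2 false y2) (W2 true y2)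
        = ∑ y1, ∑ y2, (W1 false y1 + W1 true y1)/2 * mfun ρ (W2 false y2) (W2 true y2) := by
          symm
          calc ∑ y1, ∑ y2, ((W1 false y1 + W1 true y1)/2 * mfun ρ (W2 false y2) (W2 true y2))
              = ∑ y1, (W1 false y1 + W1 true y1)/2
                  * ∑ y2, mfun ρ (W2 false y2) (W2 true y2) :=
                Finset.sum_congr rfl fun y1 _ => (Finset.mul_sum _ _ _).symm
            _ = (∑ y1, (W1 false y1 + W1 true y1)/2)
                  * ∑ y2, mfun ρ (W2 false y2) (W2 true y2) := (Finset.sum_mul _ _ _).symm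
            _ = ∑ y2, mfun ρ (W2 false y2) (W2 true y2) := by rw [hsum1, one_mul]
      _ ≤ ∑ y1, ∑ y2, mfun ρ (Wminus W1 W2 false (y1, y2)) (Wminus W1 W2 true (y1, y2)) := by
          refine Finset.sum_le_sum fun y1 _ => Finset.sum_le_sum fun y2 _ => ?_
          rw [hWm_f' y1 y2, hWm_t' y1 y2]
          exact pair_bound hρ (hW2_nonneg false y2) (hW2_nonneg true y2)
            (hW1_nonneg false y1) (hW1_nonneg true y1)
  -- Sp ≤ S1
  have hSp1 : Sp ≤ S1 := by
    rw [hSp_eq, hS1_def]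
    refine Finset.sum_le_sum fun y1 _ => ?_
    calc ∑ y2, ∑ u1 : Bool,
          mfun ρ (1/2 * W1 u1 y1 * W2 false y2) (1/2 * W1 (!u1) y1 * W2 true y2)
        = ∑ u1 : Bool, ∑ y2,
          mfun ρ (1/2 * W1 u1 y1 * W2 false y2) (1/2 * W1 (!u1) y1 * W2 true y2) :=
          Finset.sum_comm
      _ ≤ ∑ u1 : Bool, 1/2 * mfun ρ (W1 u1 y1) (W1 (!u1) y1) := by
          refine Finset.sum_le_sum fun u1 _ => ?_
          have eP : ∑ y2, 1/2 * W1 u1 y1 * W2 false y2 = 1/2 * W1 u1 y1 := by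
            rw [← Finset.mul_sum, hW2_sum false, mul_one]
          have eQ : ∑ y2, 1/2 * W1 (!u1) y1 * W2 true y2 = 1/2 * W1 (!u1) y1 := by
            rw [← Finset.mul_sum, hW2_sum true, mul_one]
          calc ∑ y2, mfun ρ (1/2 * W1 u1 y1 * W2 false y2) (1/2 * W1 (!u1) y1 * W2 true y2)
              ≤ mfun ρ (∑ y2, 1/2 * W1 u1 y1 * W2 false y2)
                  (∑ y2, 1/2 * W1 (!u1) y1 * W2 true y2) :=
                mfun_sum hρ _ _ _
                  (fun y2 _ => mul_nonneg (mul_nonneg (by norm_num) (hW1_nonneg _ _)) (hW2_nonneg _ _))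
                  (fun y2 _ => mul_nonneg (mul_nonneg (by norm_num) (hW1_nonneg _ _)) (hW2_nonneg _ _))
            _ = 1/2 * mfun ρ (W1 u1 y1) (W1 (!u1) y1) := by
                rw [eP, eQ]
                exact mfun_smul hρ (by norm_num) (hW1_nonneg _ _) (hW1_nonneg _ _)
      _ = mfun ρ (W1 false y1) (W1 true y1) := by
          rw [Fintype.sum_bool]
          simp only [Bool.not_true, Bool.not_false]
          rw [show mfun ρ (W1 true y1) (W1 false y1) = mfun ρ (W1 false y1) (W1 true y1)
            from mfun_comm]
          ring
  -- Sp ≤ S2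
  have hSp2 : Sp ≤ S2 := by
    rw [hSp_eq, hS2_def, Finset.sum_comm]
    refine Finset.sum_le_sum fun y2 _ => ?_
    calc ∑ y1, ∑ u1 : Bool,
          mfun ρ (1/2 * W1 u1 y1 * W2 false y2) (1/2 * W1 (!u1) y1 * W2 true y2)
        ≤ ∑ y1, (W1 false y1 + W1 true y1)/2 * mfun ρ (W2 false y2) (W2 true y2) := by
          refine Finset.sum_le_sum fun y1 _ => ?_
          have eP : ∑ u1 : Bool, 1/2 * W1 u1 y1 * W2 false y2
              = (W1 false y1 + W1 true y1)/2 * W2 false y2 := by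
            rw [Fintype.sum_bool]; ring
          have eQ : ∑ u1 : Bool, 1/2 * W1 (!u1) y1 * W2 true y2
              = (W1 false y1 + W1 true y1)/2 * W2 true y2 := by
            rw [Fintype.sum_bool]; simp only [Bool.not_true, Bool.not_false]; ring
          calc ∑ u1 : Bool,
                mfun ρ (1/2 * W1 u1 y1 * W2 false y2) (1/2 * W1 (!u1) y1 * W2 true y2)
              ≤ mfun ρ (∑ u1 : Bool, 1/2 * W1 u1 y1 * W2 false y2)
                  (∑ u1 : Bool, 1/2 * W1 (!u1) y1 * W2 true y2) :=
                mfun_sum hρ _ _ _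
                  (fun u1 _ => mul_nonneg (mul_nonneg (by norm_num) (hW1_nonneg _ _)) (hW2_nonneg _ _))
                  (fun u1 _ => mul_nonneg (mul_nonneg (by norm_num) (hW1_nonneg _ _)) (hW2_nonneg _ _))
            _ = (W1 false y1 + W1 true y1)/2 * mfun ρ (W2 false y2) (W2 true y2) := by
                rw [eP, eQ]
                exact mfun_smul hρ (by have := hW1_nonneg false y1; have := hW1_nonneg true y1; linarith) (hW2_nonneg _ _) (hW2_nonneg _ _)
      _ = mfun ρ (W2 false y2) (W2 true y2) := by
          rw [← Finset.sum_mul, hsum1, one_mul]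
  -- positivity
  obtain ⟨y10, hy10⟩ : ∃ y, 0 < W1 false y := by
    by_contra h
    push_neg at h
    have h0 : ∑ y, W1 false y = 0 :=
      Finset.sum_eq_zero fun y _ => le_antisymm (h y) (hW1_nonneg false y)
    rw [hW1_sum false] at h0
    norm_num at h0
  obtain ⟨y20, hy20⟩ : ∃ y, 0 < W2 false y := by
    by_contra h
    push_neg at h
    have h0 : ∑ y, W2 false y = 0 :=
      Finset.sum_eq_zero fun y _ => le_antisymm (h y) (hW2_nonneg false y)
    rw [hW2_sum false] at h0
    norm_num at h0
  have hS1pos : 0 < S1 :=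
    Finset.sum_pos' (fun y _ => mfun_nonneg (hW1_nonneg _ _) (hW1_nonneg _ _))
      ⟨y10, Finset.mem_univ _, mfun_pos hρ hy10 (hW1_nonneg _ _)⟩
  have hS2pos : 0 < S2 :=
    Finset.sum_pos' (fun y _ => mfun_nonneg (hW2_nonneg _ _) (hW2_nonneg _ _))
      ⟨y20, Finset.mem_univ _, mfun_pos hρ hy20 (hW2_nonneg _ _)⟩
  have hWp_nonneg : ∀ x y, 0 ≤ Wplus W1 W2 x y := by
    intro x y
    exact mul_nonneg (mul_nonneg (by norm_num) (hW1_nonneg _ _)) (hW2_nonneg _ _)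
  have hSppos : 0 < Sp := by
    refine Finset.sum_pos' (fun y _ => mfun_nonneg (hWp_nonneg _ _) (hWp_nonneg _ _))
      ⟨(y10, y20, false), Finset.mem_univ _, mfun_pos hρ ?_ (hWp_nonneg _ _)⟩
    rw [hWp_f]
    positivity
  -- conclude
  refine ⟨⟨neg_le_neg (Real.log_le_log hS1pos hS1m), neg_le_neg (Real.log_le_log hSppos hSp1)⟩,
    ⟨neg_le_neg (Real.log_le_log hS2pos hS2m), neg_le_neg (Real.log_le_log hSppos hSp2)⟩⟩
end

section
/- Fix ρ ∈ [1,2] and z ∈ [0,1). Then the function H_{z,ρ}(t) = h(ρ, g⁻¹(ρ,t), z) is convex on the interval [2^{−ρ}, 1]. -/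
open Real

/-!
Write `β, γ` for the `1/(1+ρ)`-th powers of `1 + x, 1 - x` and `V = Vx ρ x = (β - γ)/(β + γ)`.
Then `g ρ x = 1 / χ(V)` with `χ(V) = ((1+V)^(1+ρ) + (1-V)^(1+ρ))/2` (`chi ρ`, with derivatives
`chi1 ρ`, `chi2 ρ`, `chi3 ρ`), and
`h(ρ, x, z) = g ρ x * g ρ z * χ(e V)` with `e = Vx ρ z`. Hence `H(t) = g ρ z * t * ψ(1/t)` for
`ψ = χ(e ·) ∘ χ⁻¹`, and the perspective `t ↦ t ψ(1/t)` of a convex function is convex.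
By Cauchy's mean value theorem `ψ` is convex as soon as `χ'(eV)/χ'(V)` increases with `V`, which
holds because the elasticity `V χ''(V)/χ'(V)` decreases. For `1 ≤ ρ ≤ 2` the latter comes down to
`sinh (L y) ≤ L sinh y` for `L = ρ - 1 ∈ [0, 1]` and `y ≥ 0`, i.e. to the convexity of `sinh` on
`[0, ∞)`.
-/

open Set

theorem inv_mem_Icc_inv {c d t : ℝ} (hc : 0 < c) (ht : t ∈ Icc c d) : t⁻¹ ∈ Icc d⁻¹ c⁻¹ :=
  ⟨inv_anti₀ (hc.trans_le ht.1) ht.2, inv_anti₀ hc ht.1⟩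

theorem ConvexOn.mul_comp_inv {s T : Set ℝ} {ψ : ℝ → ℝ} (hψ : ConvexOn ℝ s ψ) (hT : Convex ℝ T)
    (hTpos : T ⊆ Ioi 0) (hinv : MapsTo Inv.inv T s) :
    ConvexOn ℝ T (fun t => t * ψ t⁻¹) := by
  refine ⟨hT, fun x hx y hy a b ha hb hab => ?_⟩
  have hx0 : 0 < x := hTpos hx
  have hy0 : 0 < y := hTpos hy
  set t := a * x + b * y with ht
  have ht0 : 0 < t := hTpos (hT hx hy ha hb hab)
  -- `t⁻¹` is the combination of `x⁻¹` and `y⁻¹` with weights `a x / t` and `b y / t`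
  have hw : a * x / t + b * y / t = 1 := by rw [← add_div, div_self ht0.ne']
  have key := hψ.2 (hinv hx) (hinv hy) (by positivity) (by positivity) hw
  have hmid : (a * x / t) • x⁻¹ + (b * y / t) • y⁻¹ = t⁻¹ := by
    simp only [smul_eq_mul]; field_simp; exact hab
  rw [hmid, smul_eq_mul, smul_eq_mul] at key
  simp only [smul_eq_mul]
  calc t * ψ t⁻¹ ≤ t * (a * x / t * ψ x⁻¹ + b * y / t * ψ y⁻¹) :=
        mul_le_mul_of_nonneg_left key ht0.le
    _ = a * (x * ψ x⁻¹) + b * (y * ψ y⁻¹) := by field_simp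

theorem convexOn_comp_of_rightInvOn {k k' φ φ' κ : ℝ → ℝ} {a b : ℝ} {s : Set ℝ}
    (hs : Convex ℝ s) (hκ : MapsTo κ s (Icc a b)) (hkκ : ∀ t ∈ s, k (κ t) = t)
    (hk : ContinuousOn k (Icc a b)) (hφ : ContinuousOn φ (Icc a b))
    (hk' : ∀ v ∈ Ioo a b, HasDerivAt k (k' v) v) (hφ' : ∀ v ∈ Ioo a b, HasDerivAt φ (φ' v) v)
    (hk'pos : ∀ v ∈ Ioo a b, 0 < k' v) (hmono : MonotoneOn (fun v => φ' v / k' v) (Ioo a b)) :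
    ConvexOn ℝ s (φ ∘ κ) := by
  have hk_strictMono : StrictMonoOn k (Icc a b) := by
    refine strictMonoOn_of_deriv_pos (convex_Icc a b) hk fun v hv => ?_
    rw [interior_Icc] at hv
    rw [(hk' v hv).deriv]
    exact hk'pos v hv
  have hκ_lt : ∀ x ∈ s, ∀ y ∈ s, x < y → κ x < κ y := by
    intro x hx y hy hxy
    by_contra! h
    have := hk_strictMono.monotoneOn (hκ hy) (hκ hx) h
    rw [hkκ x hx, hkκ y hy] at this
    linarith
  -- Cauchy's mean value theorem for `φ` and `k` on `[κ x, κ y]`, where `k (κ y) - k (κ x) = y - x`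
  have hslope : ∀ x ∈ s, ∀ y ∈ s, x < y →
      ∃ ξ ∈ Ioo (κ x) (κ y), (φ (κ y) - φ (κ x)) / (y - x) = φ' ξ / k' ξ := by
    intro x hx y hy hxy
    have hsub : Icc (κ x) (κ y) ⊆ Icc a b := Icc_subset_Icc (hκ hx).1 (hκ hy).2
    have hsub' : Ioo (κ x) (κ y) ⊆ Ioo a b := Ioo_subset_Ioo (hκ hx).1 (hκ hy).2
    obtain ⟨ξ, hξ, h⟩ := exists_ratio_hasDerivAt_eq_ratio_slope φ φ' (hκ_lt x hx y hy hxy)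
      (hφ.mono hsub) (fun v hv => hφ' v (hsub' hv)) k k' (hk.mono hsub)
      (fun v hv => hk' v (hsub' hv))
    rw [hkκ y hy, hkκ x hx] at h
    have := hk'pos ξ (hsub' hξ)
    refine ⟨ξ, hξ, ?_⟩
    rw [div_eq_div_iff (sub_pos.2 hxy).ne' this.ne']
    linarith
  refine convexOn_of_slope_mono_adjacent hs fun {x y z} hx hz hxy hyz => ?_
  have hy : y ∈ s := hs.ordConnected.out hx hz ⟨hxy.le, hyz.le⟩
  obtain ⟨ξ, hξ, hxy'⟩ := hslope x hx y hy hxy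
  obtain ⟨η, hη, hyz'⟩ := hslope y hy z hz hyz
  have hIoo : Ioo (κ x) (κ z) ⊆ Ioo a b := Ioo_subset_Ioo (hκ hx).1 (hκ hz).2
  simp only [Function.comp_apply]
  rw [hxy', hyz']
  exact hmono (hIoo ⟨hξ.1, hξ.2.trans (hκ_lt y hy z hz hyz)⟩)
    (hIoo ⟨(hκ_lt x hx y hy hxy).trans hη.1, hη.2⟩) (hξ.2.trans hη.1).le

theorem monotoneOn_div_comp_const_mul {f f' : ℝ → ℝ} {b e : ℝ} (he0 : 0 < e) (he1 : e ≤ 1)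
    (hf : ∀ m ∈ Ioo 0 b, HasDerivAt f (f' m) m) (hpos : ∀ m ∈ Ioo 0 b, 0 < f m)
    (hQ : AntitoneOn (fun m => m * f' m / f m) (Ioo 0 b)) :
    MonotoneOn (fun V => f (e * V) / f V) (Ioo 0 b) := by
  have heV : ∀ V ∈ Ioo 0 b, e * V ∈ Ioo 0 b := fun V hV =>
    ⟨mul_pos he0 hV.1, (mul_le_of_le_one_left hV.1.le he1).trans_lt hV.2⟩
  have hderiv : ∀ V ∈ Ioo 0 b, HasDerivAt (fun V => f (e * V) / f V)
      ((f' (e * V) * e * f V - f (e * V) * f' V) / f V ^ 2) V := fun V hV =>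
    (((hf _ (heV V hV)).comp V ((hasDerivAt_id V).const_mul e)).div (hf V hV)
      (hpos V hV).ne').congr_deriv (by simp)
  refine monotoneOn_of_deriv_nonneg (convex_Ioo 0 b)
    (fun V hV => (hderiv V hV).continuousAt.continuousWithinAt)
    (fun V hV => (hderiv V (by simpa using hV)).differentiableAt.differentiableWithinAt)
    fun V hV => ?_
  rw [interior_Ioo] at hV
  rw [(hderiv V hV).deriv]
  have hfV := hpos V hV
  have hfeV := hpos _ (heV V hV)
  have hQ' := hQ (heV V hV) hV (mul_le_of_le_one_left hV.1.le he1)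
  simp only at hQ'
  rw [div_le_div_iff₀ hfV hfeV] at hQ'
  have : f (e * V) * f' V * V ≤ f' (e * V) * e * f V * V := by nlinarith
  exact div_nonneg (by nlinarith [hV.1]) (by positivity)

theorem Real.convexOn_sinh : ConvexOn ℝ (Ici 0) sinh := by
  refine MonotoneOn.convexOn_of_deriv (convex_Ici 0) continuous_sinh.continuousOn
    differentiable_sinh.differentiableOn ?_
  rw [deriv_sinh, interior_Ici]
  intro x hx y hy hxy
  rw [cosh_le_cosh, abs_of_pos hx, abs_of_pos (mem_Ioi.1 hy)]
  exact hxy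

theorem Real.sinh_mul_le {L x : ℝ} (hx : 0 ≤ x) (hL0 : 0 ≤ L) (hL1 : L ≤ 1) :
    sinh (L * x) ≤ L * sinh x := by
  have := convexOn_sinh.2 (mem_Ici.2 le_rfl) (mem_Ici.2 hx) (sub_nonneg.2 hL1) hL0
    (sub_add_cancel 1 L)
  simpa using this

theorem Real.rpow_sub_inv_rpow_le {τ L : ℝ} (hτ : 1 ≤ τ) (hL0 : 0 ≤ L) (hL1 : L ≤ 1) :
    τ ^ L - (τ ^ L)⁻¹ ≤ L * (τ - τ⁻¹) := by
  have hτ0 : 0 < τ := zero_lt_one.trans_le hτ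
  have h := sinh_mul_le (log_nonneg hτ) hL0 hL1
  rw [← log_rpow hτ0, sinh_log (rpow_pos_of_pos hτ0 L), sinh_log hτ0] at h
  linarith

theorem Real.mul_mul_rpow_sq_sub_le {A B L : ℝ} (hB : 0 < B) (hBA : B ≤ A) (hL0 : 0 ≤ L)
    (hL1 : L ≤ 1) :
    A * B * ((A ^ L) ^ 2 - (B ^ L) ^ 2) ≤ L * (A ^ 2 - B ^ 2) * (A ^ L * B ^ L) := by
  have hA : 0 < A := hB.trans_le hBA
  have h := rpow_sub_inv_rpow_le ((one_le_div hB).2 hBA) hL0 hL1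
  rw [div_rpow hA.le hB.le] at h
  have ha := rpow_pos_of_pos hA L
  have hb := rpow_pos_of_pos hB L
  have key : ((A ^ L) ^ 2 - (B ^ L) ^ 2) / (A ^ L * B ^ L) ≤ L * (A ^ 2 - B ^ 2) / (A * B) := by
    convert h using 1 <;> field_simp
  rw [div_le_div_iff₀ (by positivity) (by positivity)] at key
  linarith

noncomputable def chi (ρ V : ℝ) : ℝ := ((1 + V) ^ (1 + ρ) + (1 - V) ^ (1 + ρ)) / 2

noncomputable def chi1 (ρ V : ℝ) : ℝ := (1 + ρ) * ((1 + V) ^ ρ - (1 - V) ^ ρ) / 2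

noncomputable def chi2 (ρ V : ℝ) : ℝ := (1 + ρ) * ρ * ((1 + V) ^ (ρ - 1) + (1 - V) ^ (ρ - 1)) / 2

noncomputable def chi3 (ρ V : ℝ) : ℝ :=
  (1 + ρ) * ρ * (ρ - 1) * ((1 + V) ^ (ρ - 2) - (1 - V) ^ (ρ - 2)) / 2

section chi

variable {ρ V : ℝ}

theorem hasDerivAt_one_add_rpow_add_one_sub_rpow (p : ℝ) (h1 : -1 < V) (h2 : V < 1) :
    HasDerivAt (fun V => (1 + V) ^ p + (1 - V) ^ p)
      (p * ((1 + V) ^ (p - 1) - (1 - V) ^ (p - 1))) V := by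
  have hA := ((hasDerivAt_id V).const_add 1).rpow_const (p := p) (Or.inl (by simp; linarith))
  have hB := ((hasDerivAt_id V).const_sub 1).rpow_const (p := p) (Or.inl (by simp; linarith))
  exact (hA.add hB).congr_deriv (by simp only [id]; ring)

theorem hasDerivAt_one_add_rpow_sub_one_sub_rpow (p : ℝ) (h1 : -1 < V) (h2 : V < 1) :
    HasDerivAt (fun V => (1 + V) ^ p - (1 - V) ^ p)
      (p * ((1 + V) ^ (p - 1) + (1 - V) ^ (p - 1))) V := by
  have hA := ((hasDerivAt_id V).const_add 1).rpow_const (p := p) (Or.inl (by simp; linarith))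
  have hB := ((hasDerivAt_id V).const_sub 1).rpow_const (p := p) (Or.inl (by simp; linarith))
  exact (hA.sub hB).congr_deriv (by simp only [id]; ring)

theorem hasDerivAt_chi (h1 : -1 < V) (h2 : V < 1) : HasDerivAt (chi ρ) (chi1 ρ V) V :=
  ((hasDerivAt_one_add_rpow_add_one_sub_rpow (1 + ρ) h1 h2).div_const 2).congr_deriv
    (by rw [add_sub_cancel_left, chi1])

theorem hasDerivAt_chi1 (h1 : -1 < V) (h2 : V < 1) : HasDerivAt (chi1 ρ) (chi2 ρ V) V :=
  (((hasDerivAt_one_add_rpow_sub_one_sub_rpow ρ h1 h2).const_mul (1 + ρ)).div_const 2).congr_deriv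
    (by rw [chi2]; ring)

theorem hasDerivAt_chi2 (h1 : -1 < V) (h2 : V < 1) : HasDerivAt (chi2 ρ) (chi3 ρ V) V :=
  (((hasDerivAt_one_add_rpow_add_one_sub_rpow (ρ - 1) h1 h2).const_mul ((1 + ρ) * ρ)).div_const
    2).congr_deriv (by rw [chi3, show ρ - 1 - 1 = ρ - 2 by ring]; ring)

theorem continuous_chi (hρ : 0 ≤ 1 + ρ) : Continuous (chi ρ) := by
  unfold chi
  fun_prop (disch := exact hρ)

theorem chi1_pos (hρ : 0 < ρ) (h0 : 0 < V) (h1 : V ≤ 1) : 0 < chi1 ρ V := by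
  have : (1 - V) ^ ρ < (1 + V) ^ ρ := rpow_lt_rpow (by linarith) (by linarith) hρ
  unfold chi1
  have : 0 < (1 + V) ^ ρ - (1 - V) ^ ρ := by linarith
  positivity

theorem chi_elasticity_deriv_nonpos (hρ1 : 1 ≤ ρ) (hρ2 : ρ ≤ 2) (h0 : 0 < V) (h1 : V < 1) :
    (chi2 ρ V + V * chi3 ρ V) * chi1 ρ V ≤ V * chi2 ρ V ^ 2 := by
  have hA : 0 < 1 + V := by linarith
  have hB : 0 < 1 - V := by linarith
  have key := mul_mul_rpow_sq_sub_le (A := 1 + V) hB (by linarith) (sub_nonneg.2 hρ1) (by linarith)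
  set a := (1 + V) ^ (ρ - 1)
  set b := (1 - V) ^ (ρ - 1)
  have eA : (1 + V) ^ ρ = a * (1 + V) := by
    rw [← rpow_add_one hA.ne']; norm_num
  have eB : (1 - V) ^ ρ = b * (1 - V) := by
    rw [← rpow_add_one hB.ne']; norm_num
  have eA' : (1 + V) ^ (ρ - 2) = a / (1 + V) := by
    rw [← rpow_sub_one hA.ne']; ring_nf
  have eB' : (1 - V) ^ (ρ - 2) = b / (1 - V) := by
    rw [← rpow_sub_one hB.ne']; ring_nf
  have hid : ((chi2 ρ V + V * chi3 ρ V) * chi1 ρ V - V * chi2 ρ V ^ 2) * ((1 + V) * (1 - V))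
      = (1 + ρ) ^ 2 * ρ / 4 * ((1 + V) * (1 - V) * (a ^ 2 - b ^ 2)
        - (ρ - 1) * ((1 + V) ^ 2 - (1 - V) ^ 2) * (a * b)) := by
    unfold chi1 chi2 chi3
    rw [eA, eB, eA', eB']
    field_simp
    ring
  have hneg : ((chi2 ρ V + V * chi3 ρ V) * chi1 ρ V - V * chi2 ρ V ^ 2) * ((1 + V) * (1 - V))
      ≤ 0 := by
    rw [hid]
    exact mul_nonpos_of_nonneg_of_nonpos (by positivity) (by linarith)
  have := nonpos_of_mul_nonpos_left hneg (mul_pos hA hB)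
  linarith

theorem antitoneOn_mul_chi2_div_chi1 (hρ1 : 1 ≤ ρ) (hρ2 : ρ ≤ 2) :
    AntitoneOn (fun m => m * chi2 ρ m / chi1 ρ m) (Ioo 0 1) := by
  have hderiv : ∀ m ∈ Ioo (0 : ℝ) 1, HasDerivAt (fun m => m * chi2 ρ m / chi1 ρ m)
      (((1 * chi2 ρ m + m * chi3 ρ m) * chi1 ρ m - m * chi2 ρ m * chi2 ρ m) / chi1 ρ m ^ 2) m :=
    fun m hm => ((hasDerivAt_id m).mul (hasDerivAt_chi2 (by linarith [hm.1]) hm.2)).div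
      (hasDerivAt_chi1 (by linarith [hm.1]) hm.2) (chi1_pos (by linarith) hm.1 hm.2.le).ne'
  refine antitoneOn_of_deriv_nonpos (convex_Ioo 0 1)
    (fun m hm => (hderiv m hm).continuousAt.continuousWithinAt)
    (fun m hm => (hderiv m (by simpa using hm)).differentiableAt.differentiableWithinAt)
    fun m hm => ?_
  rw [interior_Ioo] at hm
  rw [(hderiv m hm).deriv]
  have := chi_elasticity_deriv_nonpos hρ1 hρ2 hm.1 hm.2
  exact div_nonpos_of_nonpos_of_nonneg (by nlinarith) (sq_nonneg _)

end chi

theorem monotoneOn_chi1_mul_div_chi1 {ρ e : ℝ} (hρ1 : 1 ≤ ρ) (hρ2 : ρ ≤ 2) (he0 : 0 ≤ e)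
    (he1 : e ≤ 1) : MonotoneOn (fun V => chi1 ρ (e * V) * e / chi1 ρ V) (Ioo 0 1) := by
  rcases he0.eq_or_lt with rfl | he0
  · simpa using monotoneOn_const
  have h := monotoneOn_div_comp_const_mul he0 he1
    (fun m hm => hasDerivAt_chi1 (by linarith [hm.1]) hm.2)
    (fun m hm => chi1_pos (by linarith) hm.1 hm.2.le) (antitoneOn_mul_chi2_div_chi1 hρ1 hρ2)
  intro x hx y hy hxy
  simp only [mul_div_right_comm _ e]
  exact mul_le_mul_of_nonneg_right (h hx hy hxy) he0.le

noncomputable def Vx (ρ x : ℝ) : ℝ :=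
  ((1 + x) ^ (1 / (1 + ρ)) - (1 - x) ^ (1 / (1 + ρ))) /
    ((1 + x) ^ (1 / (1 + ρ)) + (1 - x) ^ (1 / (1 + ρ)))

section identities

variable {ρ : ℝ}

theorem Vx_mem_Icc (hρ : 0 < 1 + ρ) {x : ℝ} (hx : x ∈ Icc 0 1) : Vx ρ x ∈ Icc 0 1 := by
  have hβ : 0 < (1 + x) ^ (1 / (1 + ρ)) := rpow_pos_of_pos (by linarith [hx.1]) _
  have hγ : 0 ≤ (1 - x) ^ (1 / (1 + ρ)) := rpow_nonneg (by linarith [hx.2]) _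
  have hγβ : (1 - x) ^ (1 / (1 + ρ)) ≤ (1 + x) ^ (1 / (1 + ρ)) :=
    rpow_le_rpow (by linarith [hx.2]) (by linarith [hx.1]) (by positivity)
  rw [Vx, mem_Icc, div_le_one (by positivity)]
  exact ⟨div_nonneg (by linarith) (by positivity), by linarith⟩

theorem g_nonneg {z : ℝ} (h1 : -1 ≤ z) (h2 : z ≤ 1) : 0 ≤ g ρ z := by
  have := rpow_nonneg (show (0 : ℝ) ≤ 1 + z by linarith) (1 / (1 + ρ))
  have := rpow_nonneg (show (0 : ℝ) ≤ 1 - z by linarith) (1 / (1 + ρ))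
  exact rpow_nonneg (by positivity) _

theorem g_eq_half_add_rpow (x : ℝ) :
    g ρ x = (((1 + x) ^ (1 / (1 + ρ)) + (1 - x) ^ (1 / (1 + ρ))) / 2) ^ (1 + ρ) := by
  rw [g]; ring_nf

theorem chi_sub_div_add_mul {u v : ℝ} (hu : 0 ≤ u) (hv : 0 ≤ v) (huv : 0 < u + v) :
    chi ρ ((u - v) / (u + v)) * ((u + v) / 2) ^ (1 + ρ) = (u ^ (1 + ρ) + v ^ (1 + ρ)) / 2 := by
  have e1 : 1 + (u - v) / (u + v) = 2 * u / (u + v) := by field_simp; ring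
  have e2 : 1 - (u - v) / (u + v) = 2 * v / (u + v) := by field_simp; ring
  have := rpow_pos_of_pos huv (1 + ρ)
  have := rpow_pos_of_pos two_pos (1 + ρ)
  rw [chi, e1, e2, div_rpow (by positivity) huv.le, div_rpow (by positivity) huv.le,
    div_rpow huv.le zero_le_two, mul_rpow zero_le_two hu, mul_rpow zero_le_two hv]
  field_simp

theorem add_mul_g_sub_div_add (hρ : 1 + ρ ≠ 0) {p q : ℝ} (hp : 0 ≤ p) (hq : 0 ≤ q)
    (hpq : 0 < p + q) :
    (p + q) * g ρ ((p - q) / (p + q))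
      = 2 * ((p ^ (1 / (1 + ρ)) + q ^ (1 / (1 + ρ))) / 2) ^ (1 + ρ) := by
  have hc : 0 ≤ 2 / (p + q) := by positivity
  have e1 : 1 + (p - q) / (p + q) = 2 / (p + q) * p := by field_simp; ring
  have e2 : 1 - (p - q) / (p + q) = 2 / (p + q) * q := by field_simp; ring
  have e3 : 1 / 2 * ((2 / (p + q)) ^ (1 / (1 + ρ)) * p ^ (1 / (1 + ρ)))
      + 1 / 2 * ((2 / (p + q)) ^ (1 / (1 + ρ)) * q ^ (1 / (1 + ρ)))
      = (2 / (p + q)) ^ (1 / (1 + ρ)) * ((p ^ (1 / (1 + ρ)) + q ^ (1 / (1 + ρ))) / 2) := by ring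
  rw [g, e1, e2, mul_rpow hc hp, mul_rpow hc hq, e3, mul_rpow (by positivity) (by positivity),
    one_div (1 + ρ), rpow_inv_rpow hc hρ]
  field_simp

theorem chi_Vx (hρ : 1 + ρ ≠ 0) {x : ℝ} (h1 : -1 < x) (h2 : x ≤ 1) :
    chi ρ (Vx ρ x) = (g ρ x)⁻¹ := by
  have hβ : 0 < (1 + x) ^ (1 / (1 + ρ)) := rpow_pos_of_pos (by linarith) _
  have hγ : 0 ≤ (1 - x) ^ (1 / (1 + ρ)) := rpow_nonneg (by linarith) _
  refine eq_inv_of_mul_eq_one_left ?_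
  rw [g_eq_half_add_rpow, Vx, chi_sub_div_add_mul hβ.le hγ (by positivity), one_div,
    rpow_inv_rpow (by linarith) hρ, rpow_inv_rpow (by linarith) hρ]
  ring

theorem half_one_add_mul_mul_g_add_div (hρ : 1 + ρ ≠ 0) {x z : ℝ} (hx : x ∈ Icc (-1) 1)
    (hz : z ∈ Icc (-1) 1) (hxz : 0 < 1 + x * z) :
    1 / 2 * (1 + x * z) * g ρ ((x + z) / (1 + x * z))
      = (((1 + x) ^ (1 / (1 + ρ)) * (1 + z) ^ (1 / (1 + ρ))
        + (1 - x) ^ (1 / (1 + ρ)) * (1 - z) ^ (1 / (1 + ρ))) / 2) ^ (1 + ρ) / 2 := by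
  obtain ⟨hx0, hx1⟩ := hx
  obtain ⟨hz0, hz1⟩ := hz
  have h := add_mul_g_sub_div_add hρ (p := (1 + x) * (1 + z)) (q := (1 - x) * (1 - z))
    (by nlinarith) (by nlinarith) (by nlinarith)
  rw [mul_rpow (by linarith) (by linarith), mul_rpow (by linarith) (by linarith),
    show ((1 + x) * (1 + z) - (1 - x) * (1 - z)) / ((1 + x) * (1 + z) + (1 - x) * (1 - z))
      = (x + z) / (1 + x * z) by rw [div_eq_div_iff (by nlinarith) hxz.ne']; ring] at h
  linear_combination h / 4

theorem hfun_eq (hρ : 1 + ρ ≠ 0) {x z : ℝ} (hx : x ∈ Icc 0 1) (hz : z ∈ Ico 0 1) :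
    hfun ρ x z = g ρ x * g ρ z * chi ρ (Vx ρ z * Vx ρ x) := by
  obtain ⟨hx0, hx1⟩ := hx
  obtain ⟨hz0, hz1⟩ := hz
  have h1 := half_one_add_mul_mul_g_add_div hρ (x := x) (z := z) ⟨by linarith, hx1⟩
    ⟨by linarith, hz1.le⟩ (by nlinarith)
  have h2 := half_one_add_mul_mul_g_add_div hρ (x := x) (z := -z) ⟨by linarith, hx1⟩
    ⟨by linarith, by linarith⟩ (by nlinarith)
  simp only [mul_neg, ← sub_eq_add_neg, sub_neg_eq_add] at h2
  have hβ : 0 < (1 + x) ^ (1 / (1 + ρ)) := rpow_pos_of_pos (by linarith) _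
  have hγ : 0 ≤ (1 - x) ^ (1 / (1 + ρ)) := rpow_nonneg (by linarith) _
  have hl : 0 < (1 + z) ^ (1 / (1 + ρ)) := rpow_pos_of_pos (by linarith) _
  have hμ : 0 < (1 - z) ^ (1 / (1 + ρ)) := rpow_pos_of_pos (by linarith) _
  rw [hfun, h1, h2, Vx, Vx, g_eq_half_add_rpow x, g_eq_half_add_rpow z]
  generalize (1 + x) ^ (1 / (1 + ρ)) = β at *
  generalize (1 - x) ^ (1 / (1 + ρ)) = γ at *
  generalize (1 + z) ^ (1 / (1 + ρ)) = l at *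
  generalize (1 - z) ^ (1 / (1 + ρ)) = μ at *
  have key := chi_sub_div_add_mul (ρ := ρ) (u := (β * l + γ * μ) / 2) (v := (β * μ + γ * l) / 2)
    (by positivity) (by positivity) (by positivity)
  have hV : (l - μ) * (β - γ) / ((l + μ) * (β + γ))
      = ((β * l + γ * μ) / 2 - (β * μ + γ * l) / 2)
        / ((β * l + γ * μ) / 2 + (β * μ + γ * l) / 2) := by
    rw [div_eq_div_iff (by positivity) (by positivity)]; ring
  rw [← mul_rpow (by positivity) (by positivity),
    show (β + γ) / 2 * ((l + μ) / 2) = ((β * l + γ * μ) / 2 + (β * μ + γ * l) / 2) / 2 by ring,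
    div_mul_div_comm (l - μ), hV]
  linear_combination -key
end identities

theorem convexOn_chi_mul_comp_of_rightInvOn {ρ e : ℝ} (hρ1 : 1 ≤ ρ) (hρ2 : ρ ≤ 2)
    (he : e ∈ Icc 0 1) {κ : ℝ → ℝ} {s : Set ℝ} (hs : Convex ℝ s) (hκ : MapsTo κ s (Icc 0 1))
    (hchiκ : ∀ t ∈ s, chi ρ (κ t) = t) :
    ConvexOn ℝ s (fun t => chi ρ (e * κ t)) :=
  convexOn_comp_of_rightInvOn (φ := fun V => chi ρ (e * V)) hs hκ hchiκ
    (continuous_chi (by linarith)).continuousOn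
    ((continuous_chi (by linarith)).comp (continuous_const_mul _)).continuousOn
    (fun V hV => hasDerivAt_chi (by linarith [hV.1]) hV.2)
    (fun V hV => (hasDerivAt_chi (neg_one_lt_zero.trans_le (mul_nonneg he.1 hV.1.le))
      ((mul_le_of_le_one_left hV.1.le he.2).trans_lt hV.2)).comp V
      ((hasDerivAt_id V).const_mul _))
    (fun V hV => chi1_pos (by linarith) hV.1 hV.2.le)
    (by simpa using monotoneOn_chi1_mul_div_chi1 hρ1 hρ2 he.1 he.2)

theorem H_convex_general (ρ : ℝ) (hρ : ρ ∈ Set.Icc (1:ℝ) 2)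
    (z : ℝ) (hz : z ∈ Set.Ico (0:ℝ) 1)
    (ginv : ℝ → ℝ)
    (hginv_mem : ∀ t ∈ Set.Icc ((2:ℝ)^(-ρ)) 1, ginv t ∈ Set.Icc (0:ℝ) 1)
    (hginv_right : ∀ t ∈ Set.Icc ((2:ℝ)^(-ρ)) 1, g ρ (ginv t) = t) :
    ConvexOn ℝ (Set.Icc ((2:ℝ)^(-ρ)) 1) (fun t => hfun ρ (ginv t) z) := by
  obtain ⟨hρ1, hρ2⟩ := hρ
  set c : ℝ := (2:ℝ)^(-ρ)
  have hc : 0 < c := by positivity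
  have hinv : ∀ s ∈ Icc 1 c⁻¹, s⁻¹ ∈ Icc c 1 := fun s hs => by
    simpa using inv_mem_Icc_inv one_pos hs
  -- `s ↦ Vx ρ (ginv s⁻¹)` inverts `chi ρ` on `[1, c⁻¹]`, and `t ↦ hfun ρ (ginv t) z` is `g ρ z`
  -- times the perspective `t ↦ t * ψ t⁻¹` of the function `ψ` below
  have hψ : ConvexOn ℝ (Icc 1 c⁻¹) (fun s => chi ρ (Vx ρ z * Vx ρ (ginv s⁻¹))) := by
    refine convexOn_chi_mul_comp_of_rightInvOn hρ1 hρ2 (Vx_mem_Icc (by linarith) ⟨hz.1, hz.2.le⟩)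
      (convex_Icc _ _) (fun s hs => Vx_mem_Icc (by linarith) (hginv_mem _ (hinv s hs)))
      fun s hs => ?_
    obtain ⟨hx0, hx1⟩ := hginv_mem _ (hinv s hs)
    rw [chi_Vx (by linarith) (by linarith) hx1, hginv_right _ (hinv s hs), inv_inv]
  refine ((hψ.mul_comp_inv (convex_Icc c 1) (fun t ht => hc.trans_le ht.1)
    fun t ht => by simpa using inv_mem_Icc_inv hc ht).smul
      (g_nonneg (ρ := ρ) (by linarith [hz.1]) hz.2.le)).congr fun t ht => ?_
  simp only [smul_eq_mul, inv_inv]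
  rw [hfun_eq (by linarith) (hginv_mem t ht) hz, hginv_right t ht]
  ring

theorem H_convex (ρ : ℝ) (hρ : ρ ∈ Set.Icc (1:ℝ) 2)
    (z : ℝ) (hz : z ∈ Set.Ico (0:ℝ) 1)
    (ginv : ℝ → ℝ)
    (hginv_mem : ∀ t ∈ Set.Icc ((2:ℝ)^(-ρ)) 1, ginv t ∈ Set.Icc (0:ℝ) 1)
    (hginv_left : ∀ u ∈ Set.Icc (0:ℝ) 1, ginv (g ρ u) = u)
    (hginv_right : ∀ t ∈ Set.Icc ((2:ℝ)^(-ρ)) 1, g ρ (ginv t) = t) :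
    ConvexOn ℝ (Set.Icc ((2:ℝ)^(-ρ)) 1) (fun t => hfun ρ (ginv t) z) :=
  H_convex_general ρ hρ z hz ginv hginv_mem hginv_right
end

section
/- Let W1 and W2 be B-DMCs with finite output alphabets satisfying W_i(y|0)+W_i(y|1) > 0 for every output y, let ρ ≥ 0, and let z1, z2 ∈ [0,1] satisfy g(ρ,z1) = exp(−E0(ρ,W1)) and g(ρ,z2) = exp(−E0(ρ,W2)) (i.e. W1 and W2 have the same E0(ρ,·) values as binary symmetric channels with parameters z1 and z2). Then exp(−E0(ρ, W⁻)) ≥ g(ρ, z1·z2); equivalently E0(ρ, W⁻) ≤ −log g(ρ, z1 z2), the E0 value of the minus transform of the two matched binary symmetric channels. -/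
open Real

/-!
`exp (-E₀(ρ, W)) = ∑_y qW(y) g(ρ, ΔW(y))`, and for `W⁻` both `qW` and `ΔW` are multiplicative. So
the theorem follows by applying twice the one-channel inequality: if `∑ q g(Δ) = g(z)` then
`g(δ z) ≤ ∑ q g(δ Δ)` for every `δ ∈ [0, 1]` (that is, `t ↦ g(δ g⁻¹(t))` is convex).

This is a tangent-line argument: `Δ ↦ g(δ Δ) - c g(Δ)` with `c = δ g'(δ z) / g'(z)` is minimal at
`z`, because `δ g'(δ Δ) / g'(Δ)` decreases in `Δ`. Writing `ψ` for the logarithmic derivative of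
`-g'`, this amounts to `z ↦ z ψ(z)` increasing, and in the coordinate `L = log ((1 + z) / (1 - z))`
that reduces to a scalar inequality between `t / (eᵗ - 1)` and `t / (eᵗ + 1)`.
-/

open Set

namespace GallagerE0

lemma exp_sub_one_pos {t : ℝ} (ht : 0 < t) : 0 < exp t - 1 :=
  sub_pos.mpr (Real.one_lt_exp_iff.mpr ht)

noncomputable def divExpSubOne (t : ℝ) : ℝ := t / (exp t - 1)

noncomputable def divExpAddOne (t : ℝ) : ℝ := t / (exp t + 1)

noncomputable def divExpAddOneDeriv (t : ℝ) : ℝ := (exp t + 1 - t * exp t) / (exp t + 1) ^ 2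

lemma hasDerivAt_divExpSubOne {t : ℝ} (ht : 0 < t) :
    HasDerivAt divExpSubOne ((exp t - 1 - t * exp t) / (exp t - 1) ^ 2) t := by
  refine ((hasDerivAt_id t).div ((Real.hasDerivAt_exp t).sub_const 1)
    (exp_sub_one_pos ht).ne').congr_deriv ?_
  simp

lemma hasDerivAt_divExpAddOne (t : ℝ) : HasDerivAt divExpAddOne (divExpAddOneDeriv t) t := by
  refine ((hasDerivAt_id t).div ((Real.hasDerivAt_exp t).add_const 1)
    (by positivity : exp t + 1 ≠ 0)).congr_deriv ?_
  simp [divExpAddOneDeriv]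

lemma hasDerivAt_divExpAddOneDeriv (t : ℝ) : HasDerivAt divExpAddOneDeriv
    ((exp t + 1) * exp t * (t * (exp t - 1) - 2 * (exp t + 1)) / ((exp t + 1) ^ 2) ^ 2) t := by
  have hE := Real.hasDerivAt_exp t
  refine (((hE.add_const 1).fun_sub ((hasDerivAt_id t).fun_mul hE)).fun_div
    ((hE.add_const 1).fun_pow 2) (by positivity)).congr_deriv ?_
  simp only [id]
  push_cast
  ring

lemma neg_half_le_divExpSubOne_deriv {t : ℝ} (ht : 0 < t) :
    -(1 / 2) ≤ (exp t - 1 - t * exp t) / (exp t - 1) ^ 2 := by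
  have hsinh : t ≤ (exp t - (exp t)⁻¹) / 2 := by
    simpa [Real.sinh_eq, exp_neg] using Real.self_le_sinh_iff.mpr ht.le
  have hinv : (exp t)⁻¹ * exp t = 1 := inv_mul_cancel₀ (exp_pos t).ne'
  rw [le_div_iff₀ (pow_pos (exp_sub_one_pos ht) 2)]
  nlinarith [mul_le_mul_of_nonneg_right hsinh (exp_pos t).le]

lemma divExpAddOneDeriv_le_half {t : ℝ} (ht : 0 ≤ t) : divExpAddOneDeriv t ≤ 1 / 2 := by
  have hE : 1 ≤ exp t := Real.one_le_exp ht
  rw [divExpAddOneDeriv, div_le_iff₀ (by positivity)]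
  nlinarith [mul_nonneg ht (exp_pos t).le]

lemma neg_half_le_divExpAddOneDeriv {t : ℝ} (ht : 0 ≤ t) : -(1 / 2) ≤ divExpAddOneDeriv t := by
  have hsq : (1 + t / 2) ^ 2 ≤ exp t := by
    calc (1 + t / 2) ^ 2 ≤ exp (t / 2) ^ 2 := by
          gcongr
          linarith [Real.add_one_le_exp (t / 2)]
      _ = exp t := by rw [← Real.exp_nat_mul]; congr 1; push_cast; ring
  rw [divExpAddOneDeriv, le_div_iff₀ (by positivity)]
  nlinarith [sq_nonneg (1 - t / 2)]

lemma divExpAddOneDeriv_nonpos {t : ℝ} (ht : 2 ≤ t) : divExpAddOneDeriv t ≤ 0 := by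
  have hE : 1 ≤ exp t := Real.one_le_exp (by linarith)
  exact div_nonpos_of_nonpos_of_nonneg (by nlinarith) (by positivity)

lemma antitoneOn_divExpAddOneDeriv : AntitoneOn divExpAddOneDeriv (Icc 0 2) := by
  refine antitoneOn_of_deriv_nonpos (convex_Icc 0 2)
    (fun x _ => (hasDerivAt_divExpAddOneDeriv x).continuousAt.continuousWithinAt)
    (fun x _ => (hasDerivAt_divExpAddOneDeriv x).differentiableAt.differentiableWithinAt) ?_
  intro t ht
  rw [interior_Icc] at ht
  rw [(hasDerivAt_divExpAddOneDeriv t).deriv]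
  have hE : 1 ≤ exp t := Real.one_le_exp ht.1.le
  refine div_nonpos_of_nonpos_of_nonneg (mul_nonpos_of_nonneg_of_nonpos (by positivity) ?_)
    (by positivity)
  nlinarith [mul_nonneg (sub_nonneg.mpr ht.2.le) (sub_nonneg.mpr hE)]

lemma two_mul_divExpAddOne_le {t : ℝ} (ht : 0 ≤ t) : 2 * divExpAddOne t ≤ t := by
  have hE : 1 ≤ exp t := Real.one_le_exp ht
  rw [divExpAddOne, ← mul_div_assoc, div_le_iff₀ (by positivity)]
  nlinarith

theorem divExpSubOne_sub_divExpAddOne_le {x y : ℝ} (hx : 0 < x) (hy : 0 ≤ y) :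
    divExpSubOne x - divExpAddOne y ≤
      divExpSubOne (x + y) + (x + y) - 2 * divExpAddOne (x + y) := by
  set Λ : ℝ → ℝ := fun s =>
    divExpSubOne (x + s) + (x + s) - 2 * divExpAddOne (x + s) + divExpAddOne s with hΛ
  have hder : ∀ s, 0 ≤ s → HasDerivAt Λ
      ((exp (x + s) - 1 - (x + s) * exp (x + s)) / (exp (x + s) - 1) ^ 2 + 1
        - 2 * divExpAddOneDeriv (x + s) + divExpAddOneDeriv s) s := by
    intro s hs
    have hshift : HasDerivAt (fun s : ℝ => x + s) 1 s := (hasDerivAt_id s).const_add x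
    have h1 := (hasDerivAt_divExpSubOne (by linarith : 0 < x + s)).comp s hshift
    have h2 := (hasDerivAt_divExpAddOne (x + s)).comp s hshift
    refine (((h1.fun_add hshift).fun_sub (h2.const_mul 2)).fun_add
      (hasDerivAt_divExpAddOne s)).congr_deriv ?_
    ring
  have hmono : MonotoneOn Λ (Ici 0) := by
    refine monotoneOn_of_deriv_nonneg (convex_Ici 0)
      (fun s hs => (hder s hs).continuousAt.continuousWithinAt)
      (fun s hs => (hder s (interior_subset hs)).differentiableAt.differentiableWithinAt) ?_
    intro s hs
    rw [interior_Ici, mem_Ioi] at hs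
    rw [(hder s hs.le).deriv]
    have hf1 := neg_half_le_divExpSubOne_deriv (by linarith : 0 < x + s)
    rcases le_or_gt (x + s) 2 with hsmall | hlarge
    · have := antitoneOn_divExpAddOneDeriv ⟨hs.le, by linarith⟩ ⟨by linarith, hsmall⟩
        (by linarith)
      have := divExpAddOneDeriv_le_half (by linarith : 0 ≤ x + s)
      linarith
    · have := divExpAddOneDeriv_nonpos hlarge.le
      have := neg_half_le_divExpAddOneDeriv hs.le
      linarith
  have h0 : Λ 0 = divExpSubOne x + x - 2 * divExpAddOne x := by simp [hΛ, divExpAddOne]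
  have hy' := hmono (mem_Ici.mpr le_rfl) (mem_Ici.mpr hy) hy
  rw [h0] at hy'
  simp only [hΛ] at hy'
  linarith [two_mul_divExpAddOne_le hx.le]

lemma hasDerivAt_exp_neg_mul (c L : ℝ) :
    HasDerivAt (fun L => exp (-(c * L))) (-(c * exp (-(c * L)))) L := by
  refine (((hasDerivAt_id L).const_mul c).fun_neg.exp).congr_deriv ?_
  simp only [id]
  ring

lemma hasDerivAt_log_one_sub_exp_neg_mul {c L : ℝ} (h : 0 < c * L) :
    HasDerivAt (fun L => log (1 - exp (-(c * L)))) (c / (exp (c * L) - 1)) L := by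
  have hlt : exp (-(c * L)) < 1 := Real.exp_lt_one_iff.mpr (by linarith)
  refine (((hasDerivAt_exp_neg_mul c L).const_sub 1).log (by linarith)).congr_deriv ?_
  have := exp_sub_one_pos h
  rw [exp_neg]
  field_simp

lemma hasDerivAt_log_one_add_exp_neg_mul (c L : ℝ) :
    HasDerivAt (fun L => log (1 + exp (-(c * L)))) (-(c / (exp (c * L) + 1))) L := by
  refine (((hasDerivAt_exp_neg_mul c L).const_add 1).log (by positivity)).congr_deriv ?_
  rw [exp_neg]
  field_simp

/-- `log (2 z ψ(z) / β)` in the coordinate `L = log ((1 + z) / (1 - z))`, where `β = ρ / (1 + ρ)`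
and `ψ = psi ρ`; see `mul_psi_eq`. -/
noncomputable def psiProfile (β L : ℝ) : ℝ :=
  L + log (1 - exp (-L)) + 2 * log (1 + exp (-L))
    - log (1 - exp (-(β * L))) - log (1 + exp (-((1 - β) * L)))

lemma hasDerivAt_psiProfile {β L : ℝ} (hβ0 : 0 < β) (hL : 0 < L) :
    HasDerivAt (psiProfile β)
      ((L + divExpSubOne L - 2 * divExpAddOne L
        - divExpSubOne (β * L) + divExpAddOne ((1 - β) * L)) / L) L := by
  have h₁ := hasDerivAt_log_one_sub_exp_neg_mul (c := 1) (L := L) (by linarith)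
  have h₂ := hasDerivAt_log_one_add_exp_neg_mul 1 L
  simp only [one_mul] at h₁ h₂
  refine (((((hasDerivAt_id L).fun_add h₁).fun_add (h₂.const_mul 2)).fun_sub
    (hasDerivAt_log_one_sub_exp_neg_mul (mul_pos hβ0 hL))).fun_sub
    (hasDerivAt_log_one_add_exp_neg_mul (1 - β) L)).congr_deriv ?_
  simp only [divExpSubOne, divExpAddOne]
  field_simp
  ring

lemma monotoneOn_psiProfile {β : ℝ} (hβ0 : 0 < β) (hβ1 : β ≤ 1) :
    MonotoneOn (psiProfile β) (Ioi 0) := by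
  refine monotoneOn_of_deriv_nonneg (convex_Ioi 0)
    (fun L hL => (hasDerivAt_psiProfile hβ0 hL).continuousAt.continuousWithinAt)
    (fun L hL => (hasDerivAt_psiProfile hβ0 (interior_subset hL)).differentiableAt
      |>.differentiableWithinAt) ?_
  intro L hL
  rw [interior_Ioi] at hL
  rw [(hasDerivAt_psiProfile hβ0 hL).deriv]
  have key := divExpSubOne_sub_divExpAddOne_le (mul_pos hβ0 hL)
    (mul_nonneg (sub_nonneg.mpr hβ1) hL.le)
  rw [← add_mul, add_sub_cancel, one_mul] at key
  exact div_nonneg (by linarith) hL.le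

lemma exp_psiProfile {β L : ℝ} (hβ : 0 < β) (hL : 0 < L) :
    exp (psiProfile β L) = exp L * (1 - exp (-L)) * (1 + exp (-L)) ^ 2
      / ((1 - exp (-(β * L))) * (1 + exp (-((1 - β) * L)))) := by
  have hpos : ∀ {x}, 0 < x → 0 < 1 - exp (-x) := fun hx =>
    sub_pos.mpr (Real.exp_lt_one_iff.mpr (neg_neg_of_pos hx))
  simp only [psiProfile, exp_sub, exp_add, two_mul, Real.exp_log (hpos hL),
    Real.exp_log (hpos (mul_pos hβ hL)), Real.exp_log (by positivity : 0 < 1 + exp (-L)),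
    Real.exp_log (by positivity : 0 < 1 + exp (-((1 - β) * L)))]
  rw [sq, div_div]

noncomputable def rpowMean (α z : ℝ) : ℝ := (1 / 2) * (1 + z) ^ α + (1 / 2) * (1 - z) ^ α

noncomputable def rpowMeanSlope (α z : ℝ) : ℝ := α / 2 * ((1 - z) ^ (α - 1) - (1 + z) ^ (α - 1))

lemma rpowMean_pos (α : ℝ) {z : ℝ} (hz : z ∈ Ioo (-1) 1) : 0 < rpowMean α z := by
  have h1 : 0 < (1 + z) ^ α := Real.rpow_pos_of_pos (by linarith [hz.1]) α
  have h2 : 0 < (1 - z) ^ α := Real.rpow_pos_of_pos (by linarith [hz.2]) α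
  unfold rpowMean
  positivity

lemma rpowMeanSlope_pos {α z : ℝ} (hα0 : 0 < α) (hα1 : α < 1) (hz : z ∈ Ioo 0 1) :
    0 < rpowMeanSlope α z := by
  have hlt : (1 + z) ^ (α - 1) < (1 - z) ^ (α - 1) :=
    Real.rpow_lt_rpow_of_neg (by linarith [hz.2]) (by linarith [hz.1]) (by linarith)
  unfold rpowMeanSlope
  have : 0 < (1 - z) ^ (α - 1) - (1 + z) ^ (α - 1) := by linarith
  positivity

lemma hasDerivAt_one_add_rpow (α : ℝ) {z : ℝ} (hz : -1 < z) :
    HasDerivAt (fun z => (1 + z) ^ α) (α * (1 + z) ^ (α - 1)) z := by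
  refine (((hasDerivAt_id' z).const_add 1).rpow_const (Or.inl (by linarith))).congr_deriv ?_
  ring

lemma hasDerivAt_one_sub_rpow (α : ℝ) {z : ℝ} (hz : z < 1) :
    HasDerivAt (fun z => (1 - z) ^ α) (-(α * (1 - z) ^ (α - 1))) z := by
  refine (((hasDerivAt_id' z).const_sub 1).rpow_const (Or.inl (by linarith))).congr_deriv ?_
  ring

lemma hasDerivAt_rpowMean (α : ℝ) {z : ℝ} (hz : z ∈ Ioo (-1) 1) :
    HasDerivAt (rpowMean α) (-rpowMeanSlope α z) z := by
  refine (((hasDerivAt_one_add_rpow α hz.1).const_mul (1 / 2)).fun_add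
    ((hasDerivAt_one_sub_rpow α hz.2).const_mul (1 / 2))).congr_deriv ?_
  rw [rpowMeanSlope]
  ring

lemma hasDerivAt_rpowMeanSlope (α : ℝ) {z : ℝ} (hz : z ∈ Ioo (-1) 1) :
    HasDerivAt (rpowMeanSlope α)
      (α * (1 - α) / 2 * ((1 - z) ^ (α - 2) + (1 + z) ^ (α - 2))) z := by
  refine (((hasDerivAt_one_sub_rpow (α - 1) hz.2).fun_sub
    (hasDerivAt_one_add_rpow (α - 1) hz.1)).const_mul (α / 2)).congr_deriv ?_
  rw [show α - 1 - 1 = α - 2 by ring]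
  ring

lemma continuous_g {ρ : ℝ} (hρ : -1 ≤ ρ) : Continuous (g ρ) := by
  have hα : 0 ≤ 1 / (1 + ρ) := div_nonneg zero_le_one (by linarith)
  have h1ρ : 0 ≤ 1 + ρ := by linarith
  unfold g
  fun_prop (disch := assumption)

noncomputable def gSlope (ρ z : ℝ) : ℝ :=
  (1 + ρ) * rpowMean (1 / (1 + ρ)) z ^ ρ * rpowMeanSlope (1 / (1 + ρ)) z

lemma hasDerivAt_g (ρ : ℝ) {z : ℝ} (hz : z ∈ Ioo (-1) 1) :
    HasDerivAt (g ρ) (-gSlope ρ z) z := by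
  refine ((hasDerivAt_rpowMean (1 / (1 + ρ)) hz).rpow_const
    (Or.inl (rpowMean_pos _ hz).ne')).congr_deriv ?_
  rw [gSlope, add_sub_cancel_left]
  ring

lemma gSlope_pos {ρ z : ℝ} (hρ : 0 < ρ) (hz : z ∈ Ioo 0 1) : 0 < gSlope ρ z := by
  have hS := rpowMean_pos (1 / (1 + ρ)) ⟨by linarith [hz.1], hz.2⟩
  have hα1 : 1 / (1 + ρ) < 1 := (div_lt_one (by linarith)).mpr (by linarith)
  have hT := rpowMeanSlope_pos (by positivity) hα1 hz
  exact mul_pos (mul_pos (by linarith) (Real.rpow_pos_of_pos hS ρ)) hT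

lemma antitoneOn_g {ρ : ℝ} (hρ : 0 ≤ ρ) : AntitoneOn (g ρ) (Icc 0 1) := by
  refine antitoneOn_of_deriv_nonpos (convex_Icc 0 1) (continuous_g (by linarith)).continuousOn
    (fun z hz => ?_) (fun z hz => ?_) <;> rw [interior_Icc] at hz
  · exact (hasDerivAt_g ρ ⟨by linarith [hz.1], hz.2⟩).differentiableAt.differentiableWithinAt
  · rw [(hasDerivAt_g ρ ⟨by linarith [hz.1], hz.2⟩).deriv, neg_nonpos]
    rcases hρ.eq_or_lt with rfl | hρ
    · simp [gSlope, rpowMeanSlope]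
    · exact (gSlope_pos hρ hz).le

lemma g_zero_left (z : ℝ) : g 0 z = 1 := by
  simp only [g, add_zero, div_one, Real.rpow_one]
  ring

lemma g_zero_right (ρ : ℝ) : g ρ 0 = 1 := by
  simp only [g, add_zero, sub_zero, Real.one_rpow]
  norm_num

lemma g_neg (ρ z : ℝ) : g ρ (-z) = g ρ z := by
  rw [g, g, sub_neg_eq_add, ← sub_eq_add_neg, add_comm]

lemma g_abs (ρ z : ℝ) : g ρ |z| = g ρ z := by
  rcases abs_choice z with h | h <;> rw [h]
  exact g_neg ρ z

lemma g_pos {ρ z : ℝ} (hρ : 0 ≤ ρ) (hz : |z| ≤ 1) : 0 < g ρ z := by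
  rw [← g_abs]
  refine lt_of_lt_of_le ?_ (antitoneOn_g hρ ⟨abs_nonneg z, hz⟩ ⟨zero_le_one, le_rfl⟩ hz)
  rw [g, sub_self, Real.zero_rpow (by positivity)]
  positivity

noncomputable def psi (ρ z : ℝ) : ℝ :=
  ρ * (-rpowMeanSlope (1 / (1 + ρ)) z) / rpowMean (1 / (1 + ρ)) z
    + 1 / (1 + ρ) * (1 - 1 / (1 + ρ)) / 2
      * ((1 - z) ^ (1 / (1 + ρ) - 2) + (1 + z) ^ (1 / (1 + ρ) - 2)) / rpowMeanSlope (1 / (1 + ρ)) z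

lemma hasDerivAt_log_gSlope {ρ z : ℝ} (hρ : 0 < ρ) (hz : z ∈ Ioo 0 1) :
    HasDerivAt (fun z => log (gSlope ρ z)) (psi ρ z) z := by
  have hα0 : 0 < 1 / (1 + ρ) := by positivity
  have hα1 : 1 / (1 + ρ) < 1 := (div_lt_one (by linarith)).mpr (by linarith)
  have hz' : z ∈ Ioo (-1) 1 := ⟨by linarith [hz.1], hz.2⟩
  have hsplit : (fun z => log (1 + ρ) + ρ * log (rpowMean (1 / (1 + ρ)) z)
      + log (rpowMeanSlope (1 / (1 + ρ)) z)) =ᶠ[nhds z] fun z => log (gSlope ρ z) := by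
    filter_upwards [isOpen_Ioo.mem_nhds hz] with w hw
    have hS := rpowMean_pos (1 / (1 + ρ)) ⟨by linarith [hw.1], hw.2⟩
    rw [gSlope, Real.log_mul (by positivity) (rpowMeanSlope_pos hα0 hα1 hw).ne',
      Real.log_mul (by linarith) (Real.rpow_pos_of_pos hS ρ).ne', Real.log_rpow hS]
  refine ((((hasDerivAt_rpowMean _ hz').log (rpowMean_pos _ hz').ne').const_mul ρ).const_add
    _ |>.fun_add ((hasDerivAt_rpowMeanSlope _ hz').log
      (rpowMeanSlope_pos hα0 hα1 hz).ne')).congr_of_eventuallyEq hsplit.symm |>.congr_deriv ?_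
  rw [psi]
  ring

lemma psi_algebra {ρ z P Q : ℝ} (hρ : 0 < ρ) (hz : z ∈ Ioo 0 1) (hP : 0 < P) (hQ : 0 < Q)
    (hPQ : (1 - z) * P < (1 + z) * Q) :
    z * (ρ * -(1 / (1 + ρ) / 2 * (Q / (1 - z) - P / (1 + z))) / (1 / 2 * P + 1 / 2 * Q)
      + 1 / (1 + ρ) * (ρ / (1 + ρ)) / 2 * (Q / (1 - z) ^ 2 + P / (1 + z) ^ 2)
        / (1 / (1 + ρ) / 2 * (Q / (1 - z) - P / (1 + z))))
    = ρ / (1 + ρ) / 2 * ((1 + z) / (1 - z) * (1 - ((1 + z) / (1 - z))⁻¹)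
        * (1 + ((1 + z) / (1 - z))⁻¹) ^ 2
        / ((1 - P / Q / ((1 + z) / (1 - z))) * (1 + (P / Q)⁻¹))) := by
  have hA : 0 < 1 + z := by linarith [hz.1]
  have hB : 0 < 1 - z := by linarith [hz.2]
  have h1 : Q / (1 - z) - P / (1 + z) ≠ 0 := by
    rw [div_sub_div _ _ hB.ne' hA.ne']
    exact div_ne_zero (by nlinarith) (by positivity)
  have h2 : 1 - P / Q / ((1 + z) / (1 - z)) ≠ 0 := by
    rw [div_div_div_eq, one_sub_div (by positivity)]
    exact div_ne_zero (by nlinarith) (by positivity)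
  field_simp
  ring

lemma exp_neg_mul_log {x : ℝ} (hx : 0 < x) (c : ℝ) : exp (-(c * log x)) = x ^ (-c) := by
  rw [Real.rpow_def_of_pos hx]
  ring_nf

lemma mul_psi_eq {ρ z : ℝ} (hρ : 0 < ρ) (hz : z ∈ Ioo 0 1) :
    z * psi ρ z
      = ρ / (1 + ρ) / 2 * exp (psiProfile (ρ / (1 + ρ)) (log ((1 + z) / (1 - z)))) := by
  have hA : 0 < 1 + z := by linarith [hz.1]
  have hB : 0 < 1 - z := by linarith [hz.2]
  have hx : 0 < (1 + z) / (1 - z) := div_pos hA hB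
  have hL : 0 < log ((1 + z) / (1 - z)) :=
    Real.log_pos ((one_lt_div hB).mpr (by linarith [hz.1]))
  have hα1 : 1 / (1 + ρ) < 1 := (div_lt_one (by linarith)).mpr (by linarith)
  have hβ : ρ / (1 + ρ) = 1 - 1 / (1 + ρ) := by field_simp; ring
  have hPQ : (1 - z) * (1 + z) ^ (1 / (1 + ρ)) < (1 + z) * (1 - z) ^ (1 / (1 + ρ)) := by
    have hlt : (1 + z) ^ (1 / (1 + ρ) - 1) < (1 - z) ^ (1 / (1 + ρ) - 1) :=
      Real.rpow_lt_rpow_of_neg hB (by linarith [hz.1]) (by linarith)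
    rw [Real.rpow_sub_one hA.ne', Real.rpow_sub_one hB.ne', div_lt_div_iff₀ hA hB] at hlt
    linarith
  have hsub2 : ∀ {w : ℝ}, 0 < w → w ^ (1 / (1 + ρ) - 2) = w ^ (1 / (1 + ρ)) / w ^ 2 :=
    fun hw => by rw [Real.rpow_sub hw, Real.rpow_two]
  rw [exp_psiProfile (by positivity) hL, exp_neg (log _), Real.exp_log hx, exp_neg_mul_log hx,
    exp_neg_mul_log hx, hβ, neg_sub, Real.rpow_sub_one hx.ne', sub_sub_cancel,
    Real.rpow_neg hx.le, Real.div_rpow hA.le hB.le, psi, rpowMean, rpowMeanSlope,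
    Real.rpow_sub_one hA.ne', Real.rpow_sub_one hB.ne', hsub2 hA, hsub2 hB, ← hβ]
  exact psi_algebra hρ hz (Real.rpow_pos_of_pos hA _) (Real.rpow_pos_of_pos hB _) hPQ

lemma monotoneOn_mul_psi {ρ : ℝ} (hρ : 0 < ρ) :
    MonotoneOn (fun z => z * psi ρ z) (Ioo 0 1) := by
  intro a ha b hb hab
  have hcoord : ∀ {z}, z ∈ Ioo (0 : ℝ) 1 → 1 < (1 + z) / (1 - z) := fun hz =>
    (one_lt_div (by linarith [hz.2])).mpr (by linarith [hz.1])
  have hL : log ((1 + a) / (1 - a)) ≤ log ((1 + b) / (1 - b)) :=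
    Real.log_le_log (by linarith [hcoord ha]) <| by
      rw [div_le_div_iff₀ (by linarith [ha.2]) (by linarith [hb.2])]
      nlinarith
  simp only [mul_psi_eq hρ ha, mul_psi_eq hρ hb]
  gcongr
  exact monotoneOn_psiProfile (by positivity) ((div_le_one (by linarith)).mpr (by linarith))
    (Real.log_pos (hcoord ha)) (Real.log_pos (hcoord hb)) hL

/-- The logarithmic derivative in `Δ` is `δ ψ(δ Δ) - ψ(Δ) = ((δ Δ) ψ(δ Δ) - Δ ψ(Δ)) / Δ ≤ 0`. -/
lemma antitoneOn_gSlope_ratio {ρ δ : ℝ} (hρ : 0 < ρ) (hδ0 : 0 < δ) (hδ1 : δ ≤ 1) :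
    AntitoneOn (fun Δ => δ * gSlope ρ (δ * Δ) / gSlope ρ Δ) (Ioo 0 1) := by
  have hmem : ∀ {Δ}, Δ ∈ Ioo (0 : ℝ) 1 → δ * Δ ∈ Ioo (0 : ℝ) 1 := fun hΔ =>
    ⟨mul_pos hδ0 hΔ.1, by nlinarith [hΔ.1, hΔ.2]⟩
  set M : ℝ → ℝ := fun Δ => log δ + log (gSlope ρ (δ * Δ)) - log (gSlope ρ Δ) with hM
  have hder : ∀ Δ ∈ Ioo (0 : ℝ) 1, HasDerivAt M (psi ρ (δ * Δ) * δ - psi ρ Δ) Δ :=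
    fun Δ hΔ => (((hasDerivAt_log_gSlope hρ (hmem hΔ)).comp Δ
      ((hasDerivAt_id' Δ).const_mul δ |>.congr_deriv (mul_one δ))).const_add (log δ)).sub
        (hasDerivAt_log_gSlope hρ hΔ)
  have hM_anti : AntitoneOn M (Ioo 0 1) := by
    refine antitoneOn_of_deriv_nonpos (convex_Ioo 0 1)
      (fun Δ hΔ => (hder Δ hΔ).continuousAt.continuousWithinAt)
      (fun Δ hΔ => (hder Δ (interior_subset hΔ)).differentiableAt.differentiableWithinAt) ?_
    intro Δ hΔ
    rw [interior_Ioo] at hΔ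
    rw [(hder Δ hΔ).deriv, sub_nonpos, ← mul_le_mul_iff_right₀ hΔ.1]
    calc Δ * (psi ρ (δ * Δ) * δ) = δ * Δ * psi ρ (δ * Δ) := by ring
      _ ≤ Δ * psi ρ Δ := monotoneOn_mul_psi hρ (hmem hΔ) hΔ (by nlinarith [hΔ.1])
  have hexp : ∀ Δ ∈ Ioo (0 : ℝ) 1, exp (M Δ) = δ * gSlope ρ (δ * Δ) / gSlope ρ Δ := by
    intro Δ hΔ
    rw [hM, exp_sub, exp_add, Real.exp_log hδ0, Real.exp_log (gSlope_pos hρ (hmem hΔ)),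
      Real.exp_log (gSlope_pos hρ hΔ)]
  intro a ha b hb hab
  simp only [← hexp a ha, ← hexp b hb]
  exact Real.exp_le_exp.mpr (hM_anti ha hb hab)

/-- The derivative `gSlope Δ * (c - δ * gSlope (δ * Δ) / gSlope Δ)` changes sign only at `z`. -/
lemma isMinOn_g_mul_sub {ρ δ z : ℝ} (hρ : 0 < ρ) (hδ0 : 0 < δ) (hδ1 : δ ≤ 1)
    (hz : z ∈ Ioo 0 1) :
    IsMinOn (fun Δ => g ρ (δ * Δ) - δ * gSlope ρ (δ * z) / gSlope ρ z * g ρ Δ) (Icc 0 1) z := by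
  set c := δ * gSlope ρ (δ * z) / gSlope ρ z
  set F : ℝ → ℝ := fun Δ => g ρ (δ * Δ) - c * g ρ Δ
  have hcont : ContinuousOn F (Icc 0 1) := by
    have := continuous_g (by linarith : -1 ≤ ρ)
    exact ((this.comp (continuous_const.mul continuous_id)).sub
      (continuous_const.mul this)).continuousOn
  have hder : ∀ Δ ∈ Ioo (0 : ℝ) 1,
      HasDerivAt F (gSlope ρ Δ * (c - δ * gSlope ρ (δ * Δ) / gSlope ρ Δ)) Δ := by
    intro Δ hΔ
    have hδΔ : δ * Δ ∈ Ioo (-1 : ℝ) 1 := ⟨by nlinarith [hΔ.1], by nlinarith [hΔ.1, hΔ.2]⟩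
    refine (((hasDerivAt_g ρ hδΔ).comp Δ ((hasDerivAt_id Δ).const_mul δ)).sub
      ((hasDerivAt_g ρ ⟨by linarith [hΔ.1], hΔ.2⟩).const_mul c)).congr_deriv ?_
    field_simp [(gSlope_pos hρ hΔ).ne']
    ring
  have hratio := antitoneOn_gSlope_ratio hρ hδ0 hδ1
  have hanti : AntitoneOn F (Icc 0 z) := by
    refine antitoneOn_of_deriv_nonpos (convex_Icc 0 z)
      (hcont.mono (Icc_subset_Icc le_rfl hz.2.le))
      (fun Δ hΔ => ?_) (fun Δ hΔ => ?_) <;> rw [interior_Icc] at hΔ <;>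
      have hΔ' : Δ ∈ Ioo (0 : ℝ) 1 := ⟨hΔ.1, hΔ.2.trans hz.2⟩
    · exact (hder Δ hΔ').differentiableAt.differentiableWithinAt
    · rw [(hder Δ hΔ').deriv]
      exact mul_nonpos_of_nonneg_of_nonpos (gSlope_pos hρ hΔ').le
        (sub_nonpos.mpr (hratio hΔ' hz hΔ.2.le))
  have hmono : MonotoneOn F (Icc z 1) := by
    refine monotoneOn_of_deriv_nonneg (convex_Icc z 1)
      (hcont.mono (Icc_subset_Icc hz.1.le le_rfl))
      (fun Δ hΔ => ?_) (fun Δ hΔ => ?_) <;> rw [interior_Icc] at hΔ <;>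
      have hΔ' : Δ ∈ Ioo (0 : ℝ) 1 := ⟨hz.1.trans hΔ.1, hΔ.2⟩
    · exact (hder Δ hΔ').differentiableAt.differentiableWithinAt
    · rw [(hder Δ hΔ').deriv]
      exact mul_nonneg (gSlope_pos hρ hΔ').le (sub_nonneg.mpr (hratio hz hΔ' hΔ.1.le))
  intro Δ hΔ
  rcases le_total Δ z with h | h
  · exact hanti ⟨hΔ.1, h⟩ ⟨hΔ.1.trans h, le_rfl⟩ h
  · exact hmono ⟨le_rfl, hz.2.le⟩ ⟨h, hΔ.2⟩ h

theorem g_mul_le_sum_of_sum_eq {ι : Type*} [Fintype ι] {ρ δ z : ℝ} {q Δ : ι → ℝ}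
    (hρ : 0 ≤ ρ) (hq0 : ∀ i, 0 ≤ q i) (hq1 : ∑ i, q i = 1) (hΔ : ∀ i, Δ i ∈ Icc (0 : ℝ) 1)
    (hδ : δ ∈ Icc (0 : ℝ) 1) (hz : z ∈ Icc (0 : ℝ) 1) (hm : ∑ i, q i * g ρ (Δ i) = g ρ z) :
    g ρ (δ * z) ≤ ∑ i, q i * g ρ (δ * Δ i) := by
  have hsum_const : ∀ c, ∑ i, q i * c = c := fun c => by rw [← Finset.sum_mul, hq1, one_mul]
  rcases hρ.eq_or_lt with rfl | hρ
  · simp only [g_zero_left, hsum_const, le_refl]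
  rcases hδ.1.eq_or_lt with rfl | hδ0
  · simp only [zero_mul, g_zero_right, hsum_const, le_refl]
  have hδΔ : ∀ i, δ * Δ i ∈ Icc (0 : ℝ) 1 := fun i =>
    ⟨mul_nonneg hδ0.le (hΔ i).1, mul_le_one₀ hδ.2 (hΔ i).1 (hΔ i).2⟩
  rcases hz.1.eq_or_lt with rfl | hz0
  · calc g ρ (δ * 0) = ∑ i, q i * g ρ (Δ i) := by rw [mul_zero, hm]
      _ ≤ ∑ i, q i * g ρ (δ * Δ i) := Finset.sum_le_sum fun i _ =>
          mul_le_mul_of_nonneg_left (antitoneOn_g hρ.le (hδΔ i) (hΔ i)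
            (mul_le_of_le_one_left (hΔ i).1 hδ.2)) (hq0 i)
  rcases hz.2.eq_or_lt with rfl | hz1
  · calc g ρ (δ * 1) = ∑ i, q i * g ρ δ := by rw [mul_one, hsum_const]
      _ ≤ ∑ i, q i * g ρ (δ * Δ i) := Finset.sum_le_sum fun i _ =>
          mul_le_mul_of_nonneg_left (antitoneOn_g hρ.le (hδΔ i) hδ
            (mul_le_of_le_one_right hδ0.le (hΔ i).2)) (hq0 i)
  have hmin := isMinOn_iff.mp (isMinOn_g_mul_sub hρ hδ0 hδ.2 ⟨hz0, hz1⟩)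
  set c := δ * gSlope ρ (δ * z) / gSlope ρ z
  have hsum := Finset.sum_le_sum fun i (_ : i ∈ Finset.univ) =>
    mul_le_mul_of_nonneg_left (hmin (Δ i) (hΔ i)) (hq0 i)
  simp only [hsum_const, mul_sub, Finset.sum_sub_distrib, mul_left_comm _ c, ← Finset.mul_sum,
    hm] at hsum
  linarith

lemma gallager_term_mul {ρ s a b : ℝ} (hρ : 1 + ρ ≠ 0) (hs : 0 ≤ s) (ha : 0 ≤ a) (hb : 0 ≤ b) :
    ((1 / 2) * (s * a) ^ (1 / (1 + ρ)) + (1 / 2) * (s * b) ^ (1 / (1 + ρ))) ^ (1 + ρ)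
      = s * ((1 / 2) * a ^ (1 / (1 + ρ)) + (1 / 2) * b ^ (1 / (1 + ρ))) ^ (1 + ρ) := by
  rw [Real.mul_rpow hs ha, Real.mul_rpow hs hb]
  rw [show ∀ t u v : ℝ, 1 / 2 * (t * u) + 1 / 2 * (t * v) = t * (1 / 2 * u + 1 / 2 * v) by
    intros; ring, Real.mul_rpow (by positivity) (by positivity), ← Real.rpow_mul hs,
    one_div_mul_cancel hρ, Real.rpow_one]

lemma gallager_term_eq_mul_g {ρ w₀ w₁ : ℝ} (hρ : 1 + ρ ≠ 0) (h₀ : 0 ≤ w₀) (h₁ : 0 ≤ w₁)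
    (hs : 0 < w₀ + w₁) :
    ((1 / 2) * w₀ ^ (1 / (1 + ρ)) + (1 / 2) * w₁ ^ (1 / (1 + ρ))) ^ (1 + ρ)
      = (w₀ + w₁) / 2 * g ρ ((w₀ - w₁) / (w₀ + w₁)) := by
  have h1 : 1 + (w₀ - w₁) / (w₀ + w₁) = 2 * w₀ / (w₀ + w₁) := by field_simp; ring
  have h2 : 1 - (w₀ - w₁) / (w₀ + w₁) = 2 * w₁ / (w₀ + w₁) := by field_simp; ring
  rw [g, h1, h2, ← gallager_term_mul hρ (by positivity) (by positivity) (by positivity)]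
  congr 4 <;> field_simp

section Channel

variable {Y : Type*}

lemma nonempty_of_sum_eq_one [Fintype Y] {f : Y → ℝ} (h : ∑ y, f y = 1) : Nonempty Y :=
  Finset.univ_nonempty_iff.mp (Finset.nonempty_of_sum_ne_zero (h ▸ one_ne_zero))

lemma qW_pos {W : Bool → Y → ℝ} (hW : ∀ y, 0 < W false y + W true y) (y : Y) : 0 < qW W y :=
  half_pos (hW y)

lemma sum_qW [Fintype Y] {W : Bool → Y → ℝ} (hW : ∀ x, ∑ y, W x y = 1) : ∑ y, qW W y = 1 := by
  simp only [qW, ← Finset.sum_div, Finset.sum_add_distrib, hW]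
  norm_num

lemma abs_ΔW_mem {W : Bool → Y → ℝ} (hW0 : ∀ x y, 0 ≤ W x y)
    (hW : ∀ y, 0 < W false y + W true y) (y : Y) : |ΔW W y| ∈ Icc (0 : ℝ) 1 := by
  refine ⟨abs_nonneg _, abs_le.mpr ⟨?_, ?_⟩⟩
  · rw [ΔW, le_div_iff₀ (hW y)]
    linarith [hW0 false y]
  · rw [ΔW, div_le_one (hW y)]
    linarith [hW0 true y]

lemma exp_neg_E0 [Fintype Y] [Nonempty Y] {ρ : ℝ} (hρ : 0 ≤ ρ) {W : Bool → Y → ℝ}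
    (hW0 : ∀ x y, 0 ≤ W x y) (hW : ∀ y, 0 < W false y + W true y) :
    exp (-E0 ρ W) = ∑ y, qW W y * g ρ (ΔW W y) := by
  have hterm : ∀ y, ((1 / 2) * W false y ^ (1 / (1 + ρ)) + (1 / 2) * W true y ^ (1 / (1 + ρ)))
      ^ (1 + ρ) = qW W y * g ρ (ΔW W y) := fun y =>
    gallager_term_eq_mul_g (by linarith) (hW0 false y) (hW0 true y) (hW y)
  rw [E0, neg_neg, Finset.sum_congr rfl fun y _ => hterm y]
  exact Real.exp_log (Finset.sum_pos (fun y _ => mul_pos (qW_pos hW y)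
    (g_pos hρ (abs_ΔW_mem hW0 hW y).2)) Finset.univ_nonempty)

theorem g_mul_le_sum_qW [Fintype Y] {ρ z δ : ℝ} (hρ : 0 ≤ ρ) {W : Bool → Y → ℝ}
    (hW0 : ∀ x y, 0 ≤ W x y) (hW1 : ∀ x, ∑ y, W x y = 1) (hW : ∀ y, 0 < W false y + W true y)
    (hz : z ∈ Icc (0 : ℝ) 1) (hmatch : g ρ z = exp (-E0 ρ W)) (hδ : δ ∈ Icc (0 : ℝ) 1) :
    g ρ (δ * z) ≤ ∑ y, qW W y * g ρ (δ * |ΔW W y|) := by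
  have := nonempty_of_sum_eq_one (hW1 false)
  refine g_mul_le_sum_of_sum_eq hρ (fun y => (qW_pos hW y).le) (sum_qW hW1)
    (abs_ΔW_mem hW0 hW) hδ hz ?_
  simp only [g_abs, hmatch, exp_neg_E0 hρ hW0 hW]

end Channel

section Minus

variable {Y₁ Y₂ : Type*} {W₁ : Bool → Y₁ → ℝ} {W₂ : Bool → Y₂ → ℝ}

lemma Wminus_apply (u : Bool) (p : Y₁ × Y₂) : Wminus W₁ W₂ u p
    = (1 / 2) * W₁ u p.1 * W₂ false p.2 + (1 / 2) * W₁ (!u) p.1 * W₂ true p.2 := by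
  simp only [Wminus, Fintype.sum_bool, Bool.xor_false, Bool.xor_true]
  ring

lemma Wminus_nonneg (hW₁ : ∀ x y, 0 ≤ W₁ x y) (hW₂ : ∀ x y, 0 ≤ W₂ x y) (u : Bool)
    (p : Y₁ × Y₂) : 0 ≤ Wminus W₁ W₂ u p := by
  have := hW₁ u p.1
  have := hW₁ (!u) p.1
  have := hW₂ false p.2
  have := hW₂ true p.2
  rw [Wminus_apply]
  positivity

lemma Wminus_add (p : Y₁ × Y₂) : Wminus W₁ W₂ false p + Wminus W₁ W₂ true p
    = (1 / 2) * (W₁ false p.1 + W₁ true p.1) * (W₂ false p.2 + W₂ true p.2) := by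
  simp only [Wminus_apply, Bool.not_false, Bool.not_true]
  ring

lemma Wminus_add_pos (hW₁ : ∀ y, 0 < W₁ false y + W₁ true y)
    (hW₂ : ∀ y, 0 < W₂ false y + W₂ true y) (p : Y₁ × Y₂) :
    0 < Wminus W₁ W₂ false p + Wminus W₁ W₂ true p := by
  have h₁ := hW₁ p.1
  have h₂ := hW₂ p.2
  rw [Wminus_add]
  positivity

lemma qW_Wminus (p : Y₁ × Y₂) : qW (Wminus W₁ W₂) p = qW W₁ p.1 * qW W₂ p.2 := by
  rw [qW, qW, qW, Wminus_add]
  ring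

lemma Wminus_sub (p : Y₁ × Y₂) : Wminus W₁ W₂ false p - Wminus W₁ W₂ true p
    = (1 / 2) * (W₁ false p.1 - W₁ true p.1) * (W₂ false p.2 - W₂ true p.2) := by
  simp only [Wminus_apply, Bool.not_false, Bool.not_true]
  ring

lemma ΔW_Wminus (p : Y₁ × Y₂) : ΔW (Wminus W₁ W₂) p = ΔW W₁ p.1 * ΔW W₂ p.2 := by
  rw [ΔW, ΔW, ΔW, Wminus_sub, Wminus_add, mul_assoc, mul_assoc,
    mul_div_mul_left _ _ one_half_pos.ne', div_mul_div_comm]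

end Minus

end GallagerE0

open GallagerE0 in
theorem minus_BSC_extremal {Y1 Y2 : Type*} [Fintype Y1] [Fintype Y2]
    (W1 : Bool → Y1 → ℝ) (W2 : Bool → Y2 → ℝ)
    (hW1_nonneg : ∀ x y, 0 ≤ W1 x y) (hW1_sum : ∀ x, ∑ y, W1 x y = 1)
    (hW1_pos : ∀ y, 0 < W1 false y + W1 true y)
    (hW2_nonneg : ∀ x y, 0 ≤ W2 x y) (hW2_sum : ∀ x, ∑ y, W2 x y = 1)
    (hW2_pos : ∀ y, 0 < W2 false y + W2 true y)
    (ρ : ℝ) (hρ : 0 ≤ ρ)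
    (z1 z2 : ℝ) (hz1 : z1 ∈ Set.Icc (0:ℝ) 1) (hz2 : z2 ∈ Set.Icc (0:ℝ) 1)
    (hmatch1 : g ρ z1 = Real.exp (-(E0 ρ W1)))
    (hmatch2 : g ρ z2 = Real.exp (-(E0 ρ W2))) :
    g ρ (z1 * z2) ≤ Real.exp (-(E0 ρ (Wminus W1 W2))) := by
  have := nonempty_of_sum_eq_one (hW1_sum false)
  have := nonempty_of_sum_eq_one (hW2_sum false)
  rw [exp_neg_E0 hρ (Wminus_nonneg hW1_nonneg hW2_nonneg) (Wminus_add_pos hW1_pos hW2_pos)]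
  calc g ρ (z1 * z2) = g ρ (z2 * z1) := by rw [mul_comm]
    _ ≤ ∑ y₁, qW W1 y₁ * g ρ (z2 * |ΔW W1 y₁|) :=
        g_mul_le_sum_qW hρ hW1_nonneg hW1_sum hW1_pos hz1 hmatch1 hz2
    _ ≤ ∑ y₁, qW W1 y₁ * ∑ y₂, qW W2 y₂ * g ρ (|ΔW W1 y₁| * |ΔW W2 y₂|) :=
        Finset.sum_le_sum fun y₁ _ => mul_le_mul_of_nonneg_left (by
          rw [mul_comm z2]
          exact g_mul_le_sum_qW hρ hW2_nonneg hW2_sum hW2_pos hz2 hmatch2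
            (abs_ΔW_mem hW1_nonneg hW1_pos y₁)) (qW_pos hW1_pos y₁).le
    _ = ∑ p : Y1 × Y2, qW (Wminus W1 W2) p * g ρ (ΔW (Wminus W1 W2) p) := by
        simp only [Fintype.sum_prod_type, Finset.mul_sum, qW_Wminus, ΔW_Wminus,
          ← abs_mul, g_abs, mul_assoc]
end

section
/- Let W be a B-DMC with finite output alphabet satisfying W(y|0)+W(y|1) > 0 for every output y and |Δ_W(y1)·Δ_W(y2)| < 1 for all outputs. Let W⁺ denote the plus polar transform of W with itself. Then exp(−E0(2, W⁺)) = 2^{−2} + ε²(1 − 2^{−2}) where ε = (4·exp(−E0(2,W)) − 1)/3. In particular, any two such B-DMCs with equal values of E0(2,·) have equal values of E0(2, ·⁺): the value of E0(2,W⁺) is determined by E0(2,W) alone. -/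
open Real

/-!
At `ρ = 2` the exponent `1/(1+ρ)` is a cube root and the outer power is a cube, so with
`a = W(y|0)^{1/3}`, `b = W(y|1)^{1/3}` each summand of `exp(-E₀)` expands to
`(a³ + b³)/8 + (3/8)·ab(a+b)`. Summing, `exp(-E₀(2,W)) = 1/4 + (3/8)·S_W` with
`S_W = ∑ ab(a+b)`. Cube roots are multiplicative, so the summands of `W⁺` pair up over the
bit `u₁` and factor, giving `exp(-E₀(2,W⁺)) = 1/4 + (3/16)·S_W²`; since `ε = S_W / 2`, this is
`1/4 + (3/4)·ε²`.
-/

noncomputable def E0Summand (ρ a b : ℝ) : ℝ :=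
  ((1/2) * a ^ (1/(1+ρ)) + (1/2) * b ^ (1/(1+ρ))) ^ (1+ρ)

lemma exp_neg_E0 {Y : Type*} [Fintype Y] (ρ : ℝ) (W : Bool → Y → ℝ)
    (h : 0 < ∑ y, E0Summand ρ (W false y) (W true y)) :
    exp (-(E0 ρ W)) = ∑ y, E0Summand ρ (W false y) (W true y) := by
  rw [E0, neg_neg]
  exact exp_log h

lemma rpow_one_third_pow_three {x : ℝ} (hx : 0 ≤ x) : (x ^ (1/3 : ℝ)) ^ 3 = x := by
  simpa using rpow_inv_natCast_pow hx three_ne_zero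

lemma E0Summand_two (a b : ℝ) :
    E0Summand 2 a b = ((a ^ (1/3 : ℝ) + b ^ (1/3 : ℝ)) / 2) ^ 3 := by
  rw [E0Summand, show (1:ℝ) + 2 = (3:ℕ) by norm_num, rpow_natCast]
  norm_num
  ring

/-- The cross term `a^{2/3} b^{1/3} + a^{1/3} b^{2/3}` of the cube `(a^{1/3} + b^{1/3})³`. -/
noncomputable def cubeCross (a b : ℝ) : ℝ :=
  a ^ (1/3 : ℝ) * b ^ (1/3 : ℝ) * (a ^ (1/3 : ℝ) + b ^ (1/3 : ℝ))

lemma cubeCross_nonneg {a b : ℝ} (ha : 0 ≤ a) (hb : 0 ≤ b) : 0 ≤ cubeCross a b := by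
  unfold cubeCross
  positivity

lemma E0Summand_two_eq {a b : ℝ} (ha : 0 ≤ a) (hb : 0 ≤ b) :
    E0Summand 2 a b = (a + b) / 8 + 3/8 * cubeCross a b := by
  rw [E0Summand_two, cubeCross]
  nth_rewrite 2 [← rpow_one_third_pow_three ha, ← rpow_one_third_pow_three hb]
  ring

lemma E0Summand_two_plus_pair {w₁ w₂ w₃ w₄ : ℝ}
    (h₁ : 0 ≤ w₁) (h₂ : 0 ≤ w₂) (h₃ : 0 ≤ w₃) (h₄ : 0 ≤ w₄) :
    E0Summand 2 (1/2 * w₂ * w₃) (1/2 * w₁ * w₄) + E0Summand 2 (1/2 * w₁ * w₃) (1/2 * w₂ * w₄) =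
      (w₁ + w₂) * (w₃ + w₄) / 16 + 3/16 * (cubeCross w₁ w₂ * cubeCross w₃ w₄) := by
  have half : (0:ℝ) ≤ 1/2 := by norm_num
  simp only [E0Summand_two, cubeCross, mul_rpow (mul_nonneg half _) _, mul_rpow half _,
    h₁, h₂, h₃, h₄]
  nth_rewrite 3 [← rpow_one_third_pow_three h₁, ← rpow_one_third_pow_three h₂,
    ← rpow_one_third_pow_three h₃, ← rpow_one_third_pow_three h₄]
  set p := w₁ ^ (1/3 : ℝ)
  set q := w₂ ^ (1/3 : ℝ)
  set r := w₃ ^ (1/3 : ℝ)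
  set s := w₄ ^ (1/3 : ℝ)
  linear_combination ((p^3 + q^3) * (r^3 + s^3) / 8 + 3/8 * (p*q*(p+q)) * (r*s*(r+s))) *
    rpow_one_third_pow_three half

section Channel

variable {Y : Type*} [Fintype Y]

noncomputable def crossSum (W : Bool → Y → ℝ) : ℝ :=
  ∑ y, cubeCross (W false y) (W true y)

variable {W : Bool → Y → ℝ}

lemma crossSum_nonneg (hW_nonneg : ∀ x y, 0 ≤ W x y) : 0 ≤ crossSum W :=
  Finset.sum_nonneg fun y _ => cubeCross_nonneg (hW_nonneg false y) (hW_nonneg true y)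

lemma exp_neg_E0_two (hW_nonneg : ∀ x y, 0 ≤ W x y) (hW_sum : ∀ x, ∑ y, W x y = 1) :
    exp (-(E0 2 W)) = 1/4 + 3/8 * crossSum W := by
  have hsum : ∑ y, E0Summand 2 (W false y) (W true y) = 1/4 + 3/8 * crossSum W := by
    simp only [E0Summand_two_eq (hW_nonneg false _) (hW_nonneg true _), Finset.sum_add_distrib,
      ← Finset.sum_div, crossSum, Finset.mul_sum, hW_sum]
    norm_num
  have := crossSum_nonneg hW_nonneg
  rw [exp_neg_E0 2 W (by linarith), hsum]

lemma exp_neg_E0_two_Wplus {W₁ W₂ : Bool → Y → ℝ}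
    (h₁_nonneg : ∀ x y, 0 ≤ W₁ x y) (h₁_sum : ∀ x, ∑ y, W₁ x y = 1)
    (h₂_nonneg : ∀ x y, 0 ≤ W₂ x y) (h₂_sum : ∀ x, ∑ y, W₂ x y = 1) :
    exp (-(E0 2 (Wplus W₁ W₂))) = 1/4 + 3/16 * (crossSum W₁ * crossSum W₂) := by
  have hsum : ∑ y, E0Summand 2 (Wplus W₁ W₂ false y) (Wplus W₁ W₂ true y) =
      1/4 + 3/16 * (crossSum W₁ * crossSum W₂) := by
    simp only [Fintype.sum_prod_type, Fintype.sum_bool, Wplus, Bool.xor_false, Bool.xor_true,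
      Bool.not_true, Bool.not_false, E0Summand_two_plus_pair (h₁_nonneg _ _) (h₁_nonneg _ _) (h₂_nonneg _ _)
      (h₂_nonneg _ _), Finset.sum_add_distrib, ← Finset.sum_div, ← Finset.mul_sum,
      ← Finset.sum_mul, crossSum, h₁_sum, h₂_sum]
    norm_num
  have := mul_nonneg (crossSum_nonneg h₁_nonneg) (crossSum_nonneg h₂_nonneg)
  rw [exp_neg_E0 2 _ (by linarith), hsum]

end Channel

theorem E0_plus_at_rho_two_general {Y : Type*} [Fintype Y] (W : Bool → Y → ℝ)
    (hW_nonneg : ∀ x y, 0 ≤ W x y) (hW_sum : ∀ x, ∑ y, W x y = 1)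
    (ε : ℝ) (hε : ε = (4 * Real.exp (-(E0 2 W)) - 1) / 3) :
    Real.exp (-(E0 2 (Wplus W W))) =
      (2:ℝ)^(-(2:ℝ)) + ε^2 * (1 - (2:ℝ)^(-(2:ℝ))) := by
  have hε_crossSum : ε = crossSum W / 2 := by
    rw [hε, exp_neg_E0_two hW_nonneg hW_sum]
    ring
  rw [exp_neg_E0_two_Wplus hW_nonneg hW_sum hW_nonneg hW_sum, hε_crossSum]
  norm_num
  ring

theorem E0_plus_at_rho_two {Y : Type*} [Fintype Y] (W : Bool → Y → ℝ)
    (hW_nonneg : ∀ x y, 0 ≤ W x y) (hW_sum : ∀ x, ∑ y, W x y = 1)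
    (hW_pos : ∀ y, 0 < W false y + W true y)
    (hΔ : ∀ y1 y2, |ΔW W y1 * ΔW W y2| < 1)
    (ε : ℝ) (hε : ε = (4 * Real.exp (-(E0 2 W)) - 1) / 3) :
    Real.exp (-(E0 2 (Wplus W W))) =
      (2:ℝ)^(-(2:ℝ)) + ε^2 * (1 - (2:ℝ)^(-(2:ℝ))) :=
  E0_plus_at_rho_two_general W hW_nonneg hW_sum ε hε
end

section
/- For every x ∈ [0,1] and every k ∈ [0,1), (1+x)^k·((k+1)x² − kx + 1) ≥ (1−x)^k·((k+1)x² + kx + 1), where powers are real powers. -/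
/-!
Write `g s = log (1 + s) - log (1 - s)`. Its derivative `2 / (1 - s²)` increases on `[0, 1)`, so
`g` is convex there, and since `g 0 = 0` this gives `g (k x) ≤ k g x`; exponentiating,
`(1 - x)^k (1 + k x) ≤ (1 + x)^k (1 - k x)`. The theorem follows by multiplying this with the
polynomial inequality `((k+1)x² + kx + 1)(1 - kx) ≤ ((k+1)x² - kx + 1)(1 + kx)`, whose two sides
differ by `2k(k+1)x³`.
-/

open Real Set

lemma hasDerivAt_log_one_add_sub_log_one_sub {t : ℝ} (ht : t ∈ Ioo (-1) 1) :
    HasDerivAt (fun s ↦ log (1 + s) - log (1 - s)) (2 / (1 - t ^ 2)) t := by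
  have hplus : 1 + t ≠ 0 := by linarith [ht.1]
  have hminus : 1 - t ≠ 0 := by linarith [ht.2]
  have h := (((hasDerivAt_id t).const_add 1).log hplus).sub
    (((hasDerivAt_id t).const_sub 1).log hminus)
  refine h.congr_deriv ?_
  rw [id, div_sub_div _ _ hplus hminus]
  congr 1 <;> ring

lemma convexOn_log_one_add_sub_log_one_sub :
    ConvexOn ℝ (Ico 0 1) (fun s : ℝ ↦ log (1 + s) - log (1 - s)) := by
  have hderiv : ∀ t ∈ Ico (0 : ℝ) 1,
      HasDerivAt (fun s ↦ log (1 + s) - log (1 - s)) (2 / (1 - t ^ 2)) t :=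
    fun t ht ↦ hasDerivAt_log_one_add_sub_log_one_sub ⟨by linarith [ht.1], ht.2⟩
  refine MonotoneOn.convexOn_of_deriv (convex_Ico 0 1)
    (fun t ht ↦ (hderiv t ht).continuousAt.continuousWithinAt)
    (fun t ht ↦ (hderiv t (interior_subset ht)).differentiableAt.differentiableWithinAt) ?_
  rw [interior_Ico]
  intro a ha b hb hab
  rw [(hderiv a (Ioo_subset_Ico_self ha)).deriv, (hderiv b (Ioo_subset_Ico_self hb)).deriv]
  gcongr
  · nlinarith [hb.1, hb.2]
  · nlinarith [ha.1]

lemma log_one_add_mul_sub_log_one_sub_mul_le {x k : ℝ} (hx : x ∈ Ico 0 1) (hk : k ∈ Icc 0 1) :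
    log (1 + k * x) - log (1 - k * x) ≤ k * (log (1 + x) - log (1 - x)) := by
  have h := convexOn_log_one_add_sub_log_one_sub.2 (left_mem_Ico.2 one_pos) hx
    (sub_nonneg.2 hk.2) hk.1 (sub_add_cancel 1 k)
  simpa only [smul_eq_mul, mul_zero, zero_add, add_zero, sub_zero, log_one] using h

lemma one_sub_rpow_mul_one_add_mul_le {x k : ℝ} (hx : x ∈ Icc 0 1) (hk : k ∈ Icc 0 1) :
    (1 - x) ^ k * (1 + k * x) ≤ (1 + x) ^ k * (1 - k * x) := by
  obtain ⟨hx0, hx1⟩ := hx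
  obtain ⟨hk0, hk1⟩ := hk
  rcases hx1.lt_or_eq with hx1 | rfl
  · have hkx : k * x < 1 := by nlinarith
    have key := log_one_add_mul_sub_log_one_sub_mul_le ⟨hx0, hx1⟩ ⟨hk0, hk1⟩
    rw [← log_le_log_iff (by positivity) (mul_pos (by positivity) (by linarith)),
      log_mul (by positivity) (by positivity), log_mul (by positivity) (by linarith),
      log_rpow (by linarith), log_rpow (by linarith)]
    linarith
  · rcases hk0.eq_or_lt with rfl | hk0
    · norm_num
    · rw [sub_self, zero_rpow hk0.ne', zero_mul]
      exact mul_nonneg (by positivity) (by linarith)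

theorem f1_ge_f2 (x k : ℝ) (hx : x ∈ Set.Icc (0:ℝ) 1) (hk : k ∈ Set.Ico (0:ℝ) 1) :
    (1 - x) ^ k * ((k+1)*x^2 + k*x + 1) ≤ (1 + x) ^ k * ((k+1)*x^2 - k*x + 1) := by
  obtain ⟨hx0, hx1⟩ := hx
  obtain ⟨hk0, hk1⟩ := hk
  have hkx : 0 < 1 - k * x := by nlinarith
  have hP : 0 ≤ (k + 1) * x ^ 2 - k * x + 1 := by nlinarith
  have hpoly : ((k + 1) * x ^ 2 + k * x + 1) * (1 - k * x)
      ≤ ((k + 1) * x ^ 2 - k * x + 1) * (1 + k * x) := by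
    nlinarith [mul_nonneg (mul_nonneg hk0 (by linarith : 0 ≤ k + 1)) (pow_nonneg hx0 3)]
  refine le_of_mul_le_mul_right ?_ hkx
  calc (1 - x) ^ k * ((k + 1) * x ^ 2 + k * x + 1) * (1 - k * x)
      = (1 - x) ^ k * (((k + 1) * x ^ 2 + k * x + 1) * (1 - k * x)) := by ring
    _ ≤ (1 - x) ^ k * (((k + 1) * x ^ 2 - k * x + 1) * (1 + k * x)) := by
      gcongr
    _ = ((k + 1) * x ^ 2 - k * x + 1) * ((1 - x) ^ k * (1 + k * x)) := by ring
    _ ≤ ((k + 1) * x ^ 2 - k * x + 1) * ((1 + x) ^ k * (1 - k * x)) :=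
      mul_le_mul_of_nonneg_left (one_sub_rpow_mul_one_add_mul_le ⟨hx0, hx1⟩ ⟨hk0, hk1.le⟩) hP
    _ = (1 + x) ^ k * ((k + 1) * x ^ 2 - k * x + 1) * (1 - k * x) := by ring
end
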